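/- arXiv:2406.03288 — 11 statements merged into one kernel-verified Lean document; each statement's English description precedes it below -/
import Mathlib

section
/- Aggregating balance condition, sufficiency (Theorem 1). Suppose for each n = 1, …, N the trajectory balance condition holds for (pFₙ, pBₙ, Rₙ), and the aggregating balance condition holds for the pairs (pF₁,pB₁), …, (pF_N,pB_N) together with (pF, pB). Then the marginal of pF over terminal states satisfies p_T(x) = (∏_{n=1}^N Rₙ(x)) / (Σ_{y∈𝒳} ∏_{n=1}^N Rₙ(y)) for all x ∈ 𝒳. -/
/-!
Multiplying the trajectory balance conditions of the pairs `(pFₙ, pBₙ)` shows that the product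
policy `(∏ pFₙ, ∏ pBₙ)` is trajectory balanced for the product reward `∏ Rₙ`. The aggregating
balance condition then makes `pF τ / (pB τ · ∏ Rₙ(term τ))` independent of `τ`, so `pF` is
proportional to `pB · ∏ Rₙ ∘ term`; summing over a fibre, where `pB` has mass one, and
normalising gives the marginal.
-/

open Finset

variable {T X K : Type*} [Field K]

def IsTrajectoryBalanced (term : T → X) (Z : K) (pF pB : T → K) (R : X → K) : Prop :=
  ∀ τ, Z * pF τ = R (term τ) * pB τ

def terminalMarginal [Fintype T] [DecidableEq X] (term : T → X) (p : T → K) (x : X) : K :=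
  ∑ τ ∈ univ.filter (fun τ => term τ = x), p τ

theorem IsTrajectoryBalanced.prod {ι : Type*} [Fintype ι] {term : T → X} {Z : ι → K}
    {pFn pBn : ι → T → K} {Rn : ι → X → K}
    (h : ∀ n, IsTrajectoryBalanced term (Z n) (pFn n) (pBn n) (Rn n)) :
    IsTrajectoryBalanced term (∏ n, Z n) (fun τ => ∏ n, pFn n τ) (fun τ => ∏ n, pBn n τ)
      (fun x => ∏ n, Rn n x) := fun τ => by
  simp only [← prod_mul_distrib]
  exact prod_congr rfl fun n _ => h n τ

theorem IsTrajectoryBalanced.mul_reward_eq_of_aggregating {term : T → X} {Z : K}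
    {PF PB pF pB : T → K} {R : X → K} (hTB : IsTrajectoryBalanced term Z PF PB R)
    (hPB : ∀ τ, PB τ ≠ 0)
    (hAB : ∀ τ τ', pF τ * pB τ' * (PB τ * PF τ') = pB τ * pF τ' * (PF τ * PB τ')) (τ τ' : T) :
    pF τ * (pB τ' * R (term τ')) = pB τ * R (term τ) * pF τ' := by
  refine mul_right_cancel₀ (mul_ne_zero (hPB τ) (hPB τ')) ?_
  linear_combination Z * hAB τ τ' - pF τ * pB τ' * PB τ * hTB τ' + pB τ * pF τ' * PB τ' * hTB τ

theorem exists_eq_const_mul_of_mul_eq_mul {f g : T → K} (hg : ∀ τ, g τ ≠ 0)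
    (h : ∀ τ τ', f τ * g τ' = g τ * f τ') : ∃ c, ∀ τ, f τ = c * g τ := by
  rcases isEmpty_or_nonempty T with _ | ⟨⟨τ₀⟩⟩
  · exact ⟨0, isEmptyElim⟩
  · refine ⟨f τ₀ / g τ₀, fun τ => ?_⟩
    rw [div_mul_eq_mul_div, eq_div_iff (hg τ₀), h, mul_comm]

theorem terminalMarginal_eq_div_of_eq_const_mul [Fintype T] [Fintype X] [DecidableEq X]
    {term : T → X} {pF pB : T → K} {R : X → K} {c : K}
    (hpF : ∀ τ, pF τ = c * (pB τ * R (term τ))) (hpF_sum : ∑ τ, pF τ = 1)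
    (hpB : ∀ x, terminalMarginal term pB x = 1) (x : X) :
    terminalMarginal term pF x = R x / ∑ y, R y := by
  have hfibre : ∀ x, terminalMarginal term pF x = c * R x := fun x => by
    calc terminalMarginal term pF x
        = ∑ τ ∈ univ.filter (fun τ => term τ = x), c * R x * pB τ :=
          sum_congr rfl fun τ hτ => by rw [hpF, (mem_filter.mp hτ).2]; ring
      _ = c * R x := by rw [← mul_sum, ← terminalMarginal, hpB, mul_one]
  have hnorm : c * ∑ y, R y = 1 := by
    rw [mul_sum, ← hpF_sum, ← sum_fiberwise univ term pF]
    exact sum_congr rfl fun y _ => (hfibre y).symm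
  rw [hfibre, eq_div_iff (right_ne_zero_of_mul_eq_one hnorm)]
  linear_combination R x * hnorm

theorem aggregating_balance_sufficiency_general
    {T X : Type} [Fintype T] [Fintype X] [DecidableEq X]
    (term : T → X)
    (N : ℕ) (pFn pBn : Fin N → T → ℝ) (Rn : Fin N → X → ℝ)
    (pF pB : T → ℝ)
    (hpBn_pos : ∀ n τ, 0 < pBn n τ)
    (hRn_pos : ∀ n x, 0 < Rn n x)
    (hpF_sum : ∑ τ, pF τ = 1)
    (hpB_pos : ∀ τ, 0 < pB τ)
    (hpB_sum : ∀ x, ∑ τ ∈ univ.filter (fun τ => term τ = x), pB τ = 1)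
    (hTB : ∀ n, ∃ Z > (0 : ℝ), ∀ τ, Z * pFn n τ = Rn n (term τ) * pBn n τ)
    (hAB : ∀ τ τ', pF τ * pB τ' * ∏ n, (pBn n τ * pFn n τ') =
      pB τ * pF τ' * ∏ n, (pFn n τ * pBn n τ')) :
    ∀ x, ∑ τ ∈ univ.filter (fun τ => term τ = x), pF τ =
      (∏ n, Rn n x) / ∑ y, ∏ n, Rn n y := by
  choose Z _ hZ using hTB
  have hPB : ∀ τ, ∏ n, pBn n τ ≠ 0 := fun τ => prod_ne_zero_iff.mpr fun n _ => (hpBn_pos n τ).ne'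
  have hR : ∀ x, ∏ n, Rn n x ≠ 0 := fun x => prod_ne_zero_iff.mpr fun n _ => (hRn_pos n x).ne'
  have hAB' : ∀ τ τ', pF τ * pB τ' * ((∏ n, pBn n τ) * ∏ n, pFn n τ') =
      pB τ * pF τ' * ((∏ n, pFn n τ) * ∏ n, pBn n τ') := by
    simpa only [prod_mul_distrib] using hAB
  obtain ⟨c, hc⟩ := exists_eq_const_mul_of_mul_eq_mul
    (fun τ => mul_ne_zero (hpB_pos τ).ne' (hR (term τ)))
    ((IsTrajectoryBalanced.prod hZ).mul_reward_eq_of_aggregating hPB hAB')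
  exact terminalMarginal_eq_div_of_eq_const_mul hc hpF_sum hpB_sum

/-- Aggregating balance condition, sufficiency (Theorem 1). -/
theorem aggregating_balance_sufficiency
    {T X : Type} [Fintype T] [Fintype X] [Nonempty T] [Nonempty X] [DecidableEq X]
    (term : T → X) (hsurj : Function.Surjective term)
    (N : ℕ) (pFn pBn : Fin N → T → ℝ) (Rn : Fin N → X → ℝ)
    (pF pB : T → ℝ)
    (hpFn_pos : ∀ n τ, 0 < pFn n τ) (hpFn_sum : ∀ n, ∑ τ, pFn n τ = 1)
    (hpBn_pos : ∀ n τ, 0 < pBn n τ)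
    (hpBn_sum : ∀ n x, ∑ τ ∈ univ.filter (fun τ => term τ = x), pBn n τ = 1)
    (hRn_pos : ∀ n x, 0 < Rn n x)
    (hpF_pos : ∀ τ, 0 < pF τ) (hpF_sum : ∑ τ, pF τ = 1)
    (hpB_pos : ∀ τ, 0 < pB τ)
    (hpB_sum : ∀ x, ∑ τ ∈ univ.filter (fun τ => term τ = x), pB τ = 1)
    (hTB : ∀ n, ∃ Z > (0 : ℝ), ∀ τ, Z * pFn n τ = Rn n (term τ) * pBn n τ)
    (hAB : ∀ τ τ', pF τ * pB τ' * ∏ n, (pBn n τ * pFn n τ') =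
      pB τ * pF τ' * ∏ n, (pFn n τ * pBn n τ')) :
    ∀ x, ∑ τ ∈ univ.filter (fun τ => term τ = x), pF τ =
      (∏ n, Rn n x) / ∑ y, ∏ n, Rn n y :=
  aggregating_balance_sufficiency_general term N pFn pBn Rn pF pB hpBn_pos hRn_pos hpF_sum hpB_pos
    hpB_sum hTB hAB
end

section
/- Aggregating balance condition, necessity (Theorem 1, converse direction). Suppose for each n = 1, …, N the trajectory balance condition holds for (pFₙ, pBₙ, Rₙ), and the trajectory balance condition also holds for (pF, pB, R) where R(x) = ∏_{n=1}^N Rₙ(x). Then the aggregating balance condition holds for (pF₁,pB₁), …, (pF_N,pB_N) together with (pF, pB). -/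
/-!
Trajectory balance says that each forward policy is its backward policy rescaled by the reward of
the terminal state and a constant: `pF τ = Z⁻¹ * R (term τ) * pB τ`. Substituting these
factorizations, both sides of the aggregating balance identity become the same expression,
symmetric in `τ` and `τ'`, because `R` is the product of the `Rₙ`.
-/

open Finset

theorem eq_inv_mul_mul_of_mul_eq {K : Type*} [Field K] {Z p r q : K} (hZ : Z ≠ 0)
    (h : Z * p = r * q) : p = Z⁻¹ * r * q := by
  rw [mul_assoc]
  exact (eq_inv_mul_iff_mul_eq₀ hZ).2 h

theorem aggregating_balance_of_factorization {ι T M : Type*} [Fintype ι] [CommMonoid M]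
    {f g : T → M} {fn gn c : ι → T → M} {K : M} {a : ι → M}
    (hf : ∀ τ, f τ = K * (∏ n, c n τ) * g τ)
    (hfn : ∀ n τ, fn n τ = a n * c n τ * gn n τ) (τ τ' : T) :
    f τ * g τ' * ∏ n, (gn n τ * fn n τ') = g τ * f τ' * ∏ n, (fn n τ * gn n τ') := by
  simp only [hf, hfn, prod_mul_distrib]
  ac_rfl

theorem aggregating_balance_necessity_general
    {T X : Type}
    (term : T → X)
    (N : ℕ) (pFn pBn : Fin N → T → ℝ) (Rn : Fin N → X → ℝ)
    (pF pB : T → ℝ)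
    (hTBn : ∀ n, ∃ Z > (0 : ℝ), ∀ τ, Z * pFn n τ = Rn n (term τ) * pBn n τ)
    (hTB : ∃ Z > (0 : ℝ), ∀ τ, Z * pF τ = (∏ n, Rn n (term τ)) * pB τ) :
    ∀ τ τ', pF τ * pB τ' * ∏ n, (pBn n τ * pFn n τ') =
      pB τ * pF τ' * ∏ n, (pFn n τ * pBn n τ') := by
  obtain ⟨Z, hZ, hTB⟩ := hTB
  choose Zn hZn hTBn using hTBn
  exact aggregating_balance_of_factorization (K := Z⁻¹) (a := fun n => (Zn n)⁻¹)
    (fun τ => eq_inv_mul_mul_of_mul_eq hZ.ne' (hTB τ))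
    (fun n τ => eq_inv_mul_mul_of_mul_eq (hZn n).ne' (hTBn n τ))

/-- Aggregating balance condition, necessity (Theorem 1, converse direction). -/
theorem aggregating_balance_necessity
    {T X : Type} [Fintype T] [Fintype X] [Nonempty T] [Nonempty X] [DecidableEq X]
    (term : T → X) (hsurj : Function.Surjective term)
    (N : ℕ) (pFn pBn : Fin N → T → ℝ) (Rn : Fin N → X → ℝ)
    (pF pB : T → ℝ)
    (hpFn_pos : ∀ n τ, 0 < pFn n τ) (hpFn_sum : ∀ n, ∑ τ, pFn n τ = 1)
    (hpBn_pos : ∀ n τ, 0 < pBn n τ)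
    (hpBn_sum : ∀ n x, ∑ τ ∈ univ.filter (fun τ => term τ = x), pBn n τ = 1)
    (hRn_pos : ∀ n x, 0 < Rn n x)
    (hpF_pos : ∀ τ, 0 < pF τ) (hpF_sum : ∑ τ, pF τ = 1)
    (hpB_pos : ∀ τ, 0 < pB τ)
    (hpB_sum : ∀ x, ∑ τ ∈ univ.filter (fun τ => term τ = x), pB τ = 1)
    (hTBn : ∀ n, ∃ Z > (0 : ℝ), ∀ τ, Z * pFn n τ = Rn n (term τ) * pBn n τ)
    (hTB : ∃ Z > (0 : ℝ), ∀ τ, Z * pF τ = (∏ n, Rn n (term τ)) * pB τ) :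
    ∀ τ τ', pF τ * pB τ' * ∏ n, (pBn n τ * pFn n τ') =
      pB τ * pF τ' * ∏ n, (pFn n τ * pBn n τ') :=
  aggregating_balance_necessity_general term N pFn pBn Rn pF pB hTBn hTB
end

section
/- Influence of local failures (Theorem 2). For n = 1, …, N let πₙ(x) = Rₙ(x)/Σ_{y∈𝒳} Rₙ(y), and suppose there are αₙ ∈ (0,1) and βₙ > 0 such that (1 − αₙ)·pBₙ(τ)·πₙ(term(τ)) ≤ pFₙ(τ) ≤ (1 + βₙ)·pBₙ(τ)·πₙ(term(τ)) for all τ ∈ 𝒯. Let pB be any backward policy on (𝒯, 𝒳, term). Define u(x) = ∏_{n=1}^N πₙ(x) and π(x) = u(x)/Σ_{y} u(y), and define v(x) = Σ_{τ : term(τ)=x} pB(τ)·∏_{n=1}^N pFₙ(τ)/pBₙ(τ) and π̂(x) = v(x)/Σ_{y} v(y). Then the Jeffrey divergence satisfies D_J(π, π̂) := Σ_{x∈𝒳} π(x)·log(π(x)/π̂(x)) + Σ_{x∈𝒳} π̂(x)·log(π̂(x)/π(x)) ≤ Σ_{n=1}^N log((1 + βₙ)/(1 − αₙ)). -/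
/-!
The local bounds multiply to `A · u(x) ≤ v(x) ≤ B · u(x)` with `A = ∏ₙ (1 - αₙ)` and
`B = ∏ₙ (1 + βₙ)`, since `v(x)` is a `pB`-average over the fibre of `x` of products bounded in
this way. After normalisation, `log (π / π̂) ≤ -log A + c` and `log (π̂ / π) ≤ log B - c` pointwise,
with the same constant `c = log (∑ v / ∑ u)`, which cancels in the sum of the two
Kullback–Leibler terms.
-/

open Finset Real

section WeightedMean

variable {ι : Type*} {s : Finset ι} {w f : ι → ℝ} {c : ℝ}

lemma sum_mul_le_of_sum_eq_one (hw : ∀ i ∈ s, 0 ≤ w i) (hsum : ∑ i ∈ s, w i = 1)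
    (hf : ∀ i ∈ s, f i ≤ c) : ∑ i ∈ s, w i * f i ≤ c :=
  calc ∑ i ∈ s, w i * f i ≤ ∑ i ∈ s, w i * c :=
        sum_le_sum fun i hi => mul_le_mul_of_nonneg_left (hf i hi) (hw i hi)
    _ = c := by rw [← sum_mul, hsum, one_mul]

lemma le_sum_mul_of_sum_eq_one (hw : ∀ i ∈ s, 0 ≤ w i) (hsum : ∑ i ∈ s, w i = 1)
    (hf : ∀ i ∈ s, c ≤ f i) : c ≤ ∑ i ∈ s, w i * f i :=
  calc c = ∑ i ∈ s, w i * c := by rw [← sum_mul, hsum, one_mul]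
    _ ≤ ∑ i ∈ s, w i * f i :=
        sum_le_sum fun i hi => mul_le_mul_of_nonneg_left (hf i hi) (hw i hi)

end WeightedMean

section ProductBounds

variable {ι : Type*} {s : Finset ι} {a b f g : ι → ℝ}

lemma prod_mul_prod_le_prod (ha : ∀ i ∈ s, 0 ≤ a i) (hg : ∀ i ∈ s, 0 ≤ g i)
    (hlo : ∀ i ∈ s, a i * g i ≤ f i) : (∏ i ∈ s, a i) * ∏ i ∈ s, g i ≤ ∏ i ∈ s, f i := by
  rw [← prod_mul_distrib]
  exact prod_le_prod (fun i hi => mul_nonneg (ha i hi) (hg i hi)) hlo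

lemma prod_le_prod_mul_prod (hf : ∀ i ∈ s, 0 ≤ f i) (hhi : ∀ i ∈ s, f i ≤ b i * g i) :
    ∏ i ∈ s, f i ≤ (∏ i ∈ s, b i) * ∏ i ∈ s, g i := by
  rw [← prod_mul_distrib]
  exact prod_le_prod hf hhi

end ProductBounds

section Jeffrey

variable {ι : Type*} [Fintype ι]

noncomputable def normalized (u : ι → ℝ) (i : ι) : ℝ := u i / ∑ j, u j

noncomputable def jeffreyDiv (p q : ι → ℝ) : ℝ :=
  (∑ i, p i * log (p i / q i)) + ∑ i, q i * log (q i / p i)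

variable [Nonempty ι] {u v : ι → ℝ}

lemma normalized_pos (hu : ∀ i, 0 < u i) (i : ι) : 0 < normalized u i :=
  div_pos (hu i) (sum_pos (fun j _ => hu j) univ_nonempty)

lemma sum_normalized (hu : ∀ i, 0 < u i) : ∑ i, normalized u i = 1 := by
  simp only [normalized]
  rw [← sum_div, div_self (sum_pos (fun j _ => hu j) univ_nonempty).ne']

lemma log_normalized_div_normalized (hu : ∀ i, 0 < u i) (hv : ∀ i, 0 < v i) (i : ι) :
    log (normalized u i / normalized v i) =
      log (u i / v i) + (log (∑ j, v j) - log (∑ j, u j)) := by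
  have hSu := sum_pos (fun j _ => hu j) (univ_nonempty (α := ι))
  have hSv := sum_pos (fun j _ => hv j) (univ_nonempty (α := ι))
  have hsplit : normalized u i / normalized v i = u i / v i * ((∑ j, v j) / ∑ j, u j) := by
    simp only [normalized]; field_simp
  rw [hsplit, log_mul (div_pos (hu i) (hv i)).ne' (div_pos hSv hSu).ne', log_div hSv.ne' hSu.ne']

lemma sum_mul_log_normalized_div_normalized_le {c : ℝ} (hu : ∀ i, 0 < u i)
    (hv : ∀ i, 0 < v i) (hc : ∀ i, log (u i / v i) ≤ c) :
    ∑ i, normalized u i * log (normalized u i / normalized v i) ≤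
      c + (log (∑ j, v j) - log (∑ j, u j)) :=
  sum_mul_le_of_sum_eq_one (fun i _ => (normalized_pos hu i).le) (sum_normalized hu)
    fun i _ => by rw [log_normalized_div_normalized hu hv]; linarith [hc i]

theorem jeffreyDiv_normalized_le {a b : ℝ} (ha : 0 < a) (hu : ∀ i, 0 < u i)
    (hlo : ∀ i, a * u i ≤ v i) (hhi : ∀ i, v i ≤ b * u i) :
    jeffreyDiv (normalized u) (normalized v) ≤ log (b / a) := by
  have hv : ∀ i, 0 < v i := fun i => (mul_pos ha (hu i)).trans_le (hlo i)
  obtain ⟨i₀⟩ := ‹Nonempty ι›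
  have hb : 0 < b := pos_of_mul_pos_left ((hv i₀).trans_le (hhi i₀)) (hu i₀).le
  have hlog_uv : ∀ i, log (u i / v i) ≤ log a⁻¹ := fun i =>
    log_le_log (div_pos (hu i) (hv i)) <| by
      rw [div_le_iff₀ (hv i), ← div_eq_inv_mul, le_div_iff₀ ha, mul_comm]; exact hlo i
  have hlog_vu : ∀ i, log (v i / u i) ≤ log b := fun i =>
    log_le_log (div_pos (hv i) (hu i)) ((div_le_iff₀ (hu i)).2 (hhi i))
  have := sum_mul_log_normalized_div_normalized_le hu hv hlog_uv
  have := sum_mul_log_normalized_div_normalized_le hv hu hlog_vu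
  rw [jeffreyDiv, log_div hb.ne' ha.ne']
  linarith [log_inv a]

end Jeffrey

theorem influence_of_local_failures_general
    {T X : Type} [Fintype T] [Fintype X] [Nonempty X] [DecidableEq X]
    (term : T → X)
    (N : ℕ) (pFn pBn : Fin N → T → ℝ) (Rn : Fin N → X → ℝ)
    (hpBn_pos : ∀ n τ, 0 < pBn n τ)
    (hRn_pos : ∀ n x, 0 < Rn n x)
    (pB : T → ℝ) (hpB_pos : ∀ τ, 0 < pB τ)
    (hpB_sum : ∀ x, ∑ τ ∈ univ.filter (fun τ => term τ = x), pB τ = 1)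
    (α β : Fin N → ℝ) (hα : ∀ n, α n ∈ Set.Ioo (0 : ℝ) 1) (hβ : ∀ n, 0 < β n)
    (piL : Fin N → X → ℝ) (hpiL : ∀ n x, piL n x = Rn n x / ∑ y, Rn n y)
    (hlower : ∀ n τ, (1 - α n) * (pBn n τ * piL n (term τ)) ≤ pFn n τ)
    (hupper : ∀ n τ, pFn n τ ≤ (1 + β n) * (pBn n τ * piL n (term τ)))
    (u : X → ℝ) (hu : ∀ x, u x = ∏ n, piL n x)
    (piG : X → ℝ) (hpiG : ∀ x, piG x = u x / ∑ y, u y)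
    (v : X → ℝ)
    (hv : ∀ x, v x = ∑ τ ∈ univ.filter (fun τ => term τ = x),
      pB τ * ∏ n, pFn n τ / pBn n τ)
    (piH : X → ℝ) (hpiH : ∀ x, piH x = v x / ∑ y, v y) :
    (∑ x, piG x * Real.log (piG x / piH x)) +
      (∑ x, piH x * Real.log (piH x / piG x)) ≤
        ∑ n, Real.log ((1 + β n) / (1 - α n)) := by
  have hα' : ∀ n, 0 < 1 - α n := fun n => sub_pos.2 (hα n).2
  have hpiL_pos : ∀ n x, 0 < piL n x := fun n x => by
    rw [hpiL]; exact div_pos (hRn_pos n x) (sum_pos (fun y _ => hRn_pos n y) univ_nonempty)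
  have hu_pos : ∀ x, 0 < u x := fun x => by rw [hu]; exact prod_pos fun n _ => hpiL_pos n x
  have hratio_lo : ∀ n τ, (1 - α n) * piL n (term τ) ≤ pFn n τ / pBn n τ := fun n τ => by
    rw [le_div_iff₀ (hpBn_pos n τ)]; linarith [hlower n τ]
  have hratio_hi : ∀ n τ, pFn n τ / pBn n τ ≤ (1 + β n) * piL n (term τ) := fun n τ => by
    rw [div_le_iff₀ (hpBn_pos n τ)]; linarith [hupper n τ]
  have hfibre : ∀ x, ∀ τ ∈ univ.filter (fun τ => term τ = x), u x = ∏ n, piL n (term τ) :=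
    fun x τ hτ => by rw [(mem_filter.1 hτ).2, hu]
  have hv_lo : ∀ x, (∏ n, (1 - α n)) * u x ≤ v x := fun x => by
    rw [hv]
    refine le_sum_mul_of_sum_eq_one (fun τ _ => (hpB_pos τ).le) (hpB_sum x) fun τ hτ => ?_
    rw [hfibre x τ hτ]
    exact prod_mul_prod_le_prod (fun n _ => (hα' n).le) (fun n _ => (hpiL_pos n _).le)
      fun n _ => hratio_lo n τ
  have hv_hi : ∀ x, v x ≤ (∏ n, (1 + β n)) * u x := fun x => by
    rw [hv]
    refine sum_mul_le_of_sum_eq_one (fun τ _ => (hpB_pos τ).le) (hpB_sum x) fun τ hτ => ?_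
    rw [hfibre x τ hτ]
    exact prod_le_prod_mul_prod (fun n _ => (mul_nonneg (hα' n).le (hpiL_pos n _).le).trans
      (hratio_lo n τ)) fun n _ => hratio_hi n τ
  obtain rfl : piG = normalized u := funext hpiG
  obtain rfl : piH = normalized v := funext hpiH
  calc jeffreyDiv (normalized u) (normalized v)
      ≤ log ((∏ n, (1 + β n)) / ∏ n, (1 - α n)) :=
        jeffreyDiv_normalized_le (prod_pos fun n _ => hα' n) hu_pos hv_lo hv_hi
    _ = ∑ n, log ((1 + β n) / (1 - α n)) := by
        rw [← prod_div_distrib, log_prod fun n _ => (div_pos (by linarith [hβ n]) (hα' n)).ne']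

/-- Influence of local failures (Theorem 2). -/
theorem influence_of_local_failures
    {T X : Type} [Fintype T] [Fintype X] [Nonempty T] [Nonempty X] [DecidableEq X]
    (term : T → X) (hsurj : Function.Surjective term)
    (N : ℕ) (pFn pBn : Fin N → T → ℝ) (Rn : Fin N → X → ℝ)
    (hpFn_pos : ∀ n τ, 0 < pFn n τ) (hpFn_sum : ∀ n, ∑ τ, pFn n τ = 1)
    (hpBn_pos : ∀ n τ, 0 < pBn n τ)
    (hpBn_sum : ∀ n x, ∑ τ ∈ univ.filter (fun τ => term τ = x), pBn n τ = 1)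
    (hRn_pos : ∀ n x, 0 < Rn n x)
    (pB : T → ℝ) (hpB_pos : ∀ τ, 0 < pB τ)
    (hpB_sum : ∀ x, ∑ τ ∈ univ.filter (fun τ => term τ = x), pB τ = 1)
    (α β : Fin N → ℝ) (hα : ∀ n, α n ∈ Set.Ioo (0 : ℝ) 1) (hβ : ∀ n, 0 < β n)
    (piL : Fin N → X → ℝ) (hpiL : ∀ n x, piL n x = Rn n x / ∑ y, Rn n y)
    (hlower : ∀ n τ, (1 - α n) * (pBn n τ * piL n (term τ)) ≤ pFn n τ)
    (hupper : ∀ n τ, pFn n τ ≤ (1 + β n) * (pBn n τ * piL n (term τ)))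
    (u : X → ℝ) (hu : ∀ x, u x = ∏ n, piL n x)
    (piG : X → ℝ) (hpiG : ∀ x, piG x = u x / ∑ y, u y)
    (v : X → ℝ)
    (hv : ∀ x, v x = ∑ τ ∈ univ.filter (fun τ => term τ = x),
      pB τ * ∏ n, pFn n τ / pBn n τ)
    (piH : X → ℝ) (hpiH : ∀ x, piH x = v x / ∑ y, v y) :
    (∑ x, piG x * Real.log (piG x / piH x)) +
      (∑ x, piH x * Real.log (piH x / piG x)) ≤
        ∑ n, Real.log ((1 + β n) / (1 - α n)) :=
  influence_of_local_failures_general term N pFn pBn Rn hpBn_pos hRn_pos pB hpB_pos hpB_sum α β hα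
    hβ piL hpiL hlower hupper u hu piG hpiG v hv piH hpiH
end

section
/- Contrastive balance condition, sufficiency (Lemma, converse direction). If the contrastive balance condition holds for (pF, pB, R), then the marginal of pF over terminal states satisfies p_T(x) = R(x)/Σ_{y∈𝒳} R(y) for all x ∈ 𝒳. -/
/-!
Summing the balance condition over `τ'` and using that `pB` sums to one on each fibre of `term`
shows `pF τ · Σ_y R y = R (term τ) · pB τ`. Summing this over the fibre of `x` gives
`p_T(x) · Σ_y R y = R x`, and `R x > 0` rules out a vanishing normaliser.
-/

open Finset

theorem Finset.mul_sum_eq_mul_sum_of_mul_comm_eq {ι α : Type*} [CommSemiring α]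
    (s : Finset ι) (f g : ι → α) (h : ∀ i j, f i * g j = f j * g i) (i : ι) : f i * ∑ j ∈ s, g j = g i * ∑ j ∈ s, f j := by
  rw [mul_sum, mul_sum]
  exact sum_congr rfl fun j _ => by rw [h i j, mul_comm]

section

variable {ι κ α : Type*} [Fintype ι] [DecidableEq κ]

theorem Finset.sum_fiber_comp_mul [Semiring α] (p : ι → κ) (R : κ → α) (w : ι → α) (x : κ) :
    ∑ i ∈ univ.filter (fun i => p i = x), R (p i) * w i
      = R x * ∑ i ∈ univ.filter (fun i => p i = x), w i := by
  rw [mul_sum]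
  exact sum_congr rfl fun i hi => by rw [(mem_filter.mp hi).2]

theorem Finset.sum_comp_mul_eq_sum_of_fiber_sum_eq_one [Fintype κ] [Semiring α] (p : ι → κ)
    (R : κ → α) (w : ι → α) (hw : ∀ x, ∑ i ∈ univ.filter (fun i => p i = x), w i = 1) :
    ∑ i, R (p i) * w i = ∑ x, R x := by
  rw [← sum_fiberwise univ p]
  exact sum_congr rfl fun x _ => by rw [sum_fiber_comp_mul, hw, mul_one]

end

theorem contrastive_balance_sufficiency_general
    {T X : Type} [Fintype T] [Fintype X] [DecidableEq X]
    (term : T → X)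
    (pF pB : T → ℝ) (R : X → ℝ)
    (hpF_sum : ∑ τ, pF τ = 1)
    (hpB_sum : ∀ x, ∑ τ ∈ univ.filter (fun τ => term τ = x), pB τ = 1)
    (hR : ∀ x, 0 < R x)
    (hCB : ∀ τ τ', R (term τ') * pF τ * pB τ' = R (term τ) * pF τ' * pB τ) :
    ∀ x, ∑ τ ∈ univ.filter (fun τ => term τ = x), pF τ = R x / ∑ y, R y := by
  intro x
  have hpoint : ∀ τ, pF τ * ∑ y, R y = R (term τ) * pB τ := by
    intro τ
    have h := mul_sum_eq_mul_sum_of_mul_comm_eq univ pF (fun τ => R (term τ) * pB τ)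
      (fun τ τ' => by linear_combination hCB τ τ') τ
    rwa [sum_comp_mul_eq_sum_of_fiber_sum_eq_one term R pB hpB_sum, hpF_sum, mul_one] at h
  have hfiber : (∑ τ ∈ univ.filter (fun τ => term τ = x), pF τ) * ∑ y, R y = R x := by
    rw [sum_mul, sum_congr rfl fun τ _ => hpoint τ, sum_fiber_comp_mul, hpB_sum, mul_one]
  have hnorm : ∑ y, R y ≠ 0 := by
    intro h
    rw [h, mul_zero] at hfiber
    exact (hR x).ne hfiber
  rw [eq_div_iff hnorm, hfiber]

/-- Contrastive balance condition, sufficiency (Lemma, converse direction). -/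
theorem contrastive_balance_sufficiency
    {T X : Type} [Fintype T] [Fintype X] [Nonempty T] [Nonempty X] [DecidableEq X]
    (term : T → X) (hsurj : Function.Surjective term)
    (pF pB : T → ℝ) (R : X → ℝ)
    (hpF_pos : ∀ τ, 0 < pF τ) (hpF_sum : ∑ τ, pF τ = 1)
    (hpB_pos : ∀ τ, 0 < pB τ)
    (hpB_sum : ∀ x, ∑ τ ∈ univ.filter (fun τ => term τ = x), pB τ = 1)
    (hR : ∀ x, 0 < R x)
    (hCB : ∀ τ τ', R (term τ') * pF τ * pB τ' = R (term τ) * pF τ' * pB τ) :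
    ∀ x, ∑ τ ∈ univ.filter (fun τ => term τ = x), pF τ = R x / ∑ y, R y :=
  contrastive_balance_sufficiency_general term pF pB R hpF_sum hpB_sum hR hCB
end

section
/- Contrastive balance loss (Corollary, sufficiency direction). Let ν : 𝒯 × 𝒯 → ℝ satisfy ν(τ,τ') > 0 for all τ, τ' and Σ_{(τ,τ')∈𝒯×𝒯} ν(τ,τ') = 1. Define L_CB(τ,τ') = (log(pF(τ)/pB(τ)) − log(pF(τ')/pB(τ')) + log(R(term(τ'))/R(term(τ))))². If Σ_{(τ,τ')∈𝒯×𝒯} ν(τ,τ')·L_CB(τ,τ') = 0, then the marginal of pF over terminal states satisfies p_T(x) = R(x)/Σ_{y∈𝒳} R(y) for all x ∈ 𝒳. -/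
/-!
Every summand of the contrastive loss is a square with a positive weight, so all of them
vanish. Exponentiating, `pF τ * pB τ' * R (term τ') = pF τ' * pB τ * R (term τ)` for every
pair of trajectories. Summing over `τ` in the fiber of `x` and `τ'` in the fiber of `y`, where
`pB` sums to one, gives `p_T x * R y = R x * p_T y`; summing over `y` then gives
`p_T x * ∑ y, R y = R x`.
-/

open Finset

variable {T X : Type*} [Fintype T] [DecidableEq X]

/-- The marginal `p_T` when `p = pF`. -/
def fiberSum (term : T → X) (p : T → ℝ) (x : X) : ℝ :=
  ∑ τ ∈ univ.filter (fun τ => term τ = x), p τ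

theorem sum_fiberSum [Fintype X] (term : T → X) (p : T → ℝ) :
    ∑ x, fiberSum term p x = ∑ τ, p τ :=
  sum_fiberwise univ term p

theorem eq_zero_of_sum_sum_mul_eq_zero {ι κ R : Type*} [Fintype ι] [Fintype κ]
    [Semiring R] [LinearOrder R] [IsStrictOrderedRing R] {w f : ι → κ → R}
    (hw : ∀ i j, 0 < w i j) (hf : ∀ i j, 0 ≤ f i j)
    (h : ∑ i, ∑ j, w i j * f i j = 0) (i : ι) (j : κ) : f i j = 0 := by
  have hnonneg : ∀ i j, 0 ≤ w i j * f i j := fun i j => mul_nonneg (hw i j).le (hf i j)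
  have hrow : ∑ j, w i j * f i j = 0 :=
    congrFun ((Fintype.sum_eq_zero_iff_of_nonneg fun i => sum_nonneg fun j _ => hnonneg i j).1 h) i
  have hij : w i j * f i j = 0 :=
    congrFun ((Fintype.sum_eq_zero_iff_of_nonneg (hnonneg i)).1 hrow) j
  by_contra hne
  exact (mul_pos (hw i j) ((hf i j).lt_of_ne' hne)).ne' hij

theorem Real.mul_mul_eq_of_log_div_sub_log_div_add_log_div_eq_zero {a b r a' b' r' : ℝ}
    (ha : 0 < a) (hb : 0 < b) (hr : 0 < r) (ha' : 0 < a') (hb' : 0 < b') (hr' : 0 < r')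
    (h : Real.log (a / b) - Real.log (a' / b') + Real.log (r' / r) = 0) :
    a * b' * r' = a' * b * r := by
  apply Real.log_injOn_pos (Set.mem_Ioi.2 (by positivity)) (Set.mem_Ioi.2 (by positivity))
  rw [Real.log_div ha.ne' hb.ne', Real.log_div ha'.ne' hb'.ne', Real.log_div hr'.ne' hr.ne'] at h
  rw [Real.log_mul (by positivity) hr'.ne', Real.log_mul ha.ne' hb'.ne',
    Real.log_mul (by positivity) hr.ne', Real.log_mul ha'.ne' hb.ne']
  linarith

theorem fiberSum_mul_eq_mul_fiberSum {term : T → X} {pF pB : T → ℝ} {r : X → ℝ}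
    (hpB : ∀ x, fiberSum term pB x = 1)
    (hbalance : ∀ τ τ', pF τ * pB τ' * r (term τ') = pF τ' * pB τ * r (term τ))
    (x y : X) :
    fiberSum term pF x * r y = r x * fiberSum term pF y := by
  have hpair : ∀ τ ∈ univ.filter (fun τ => term τ = x),
      ∀ τ' ∈ univ.filter (fun τ => term τ = y),
        pF τ * (pB τ' * r y) = pB τ * (pF τ' * r x) := by
    intro τ hτ τ' hτ'
    have := hbalance τ τ'
    rw [(mem_filter.1 hτ).2, (mem_filter.1 hτ').2] at this
    linear_combination this
  calc fiberSum term pF x * r y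
      = fiberSum term pF x * ∑ τ' ∈ univ.filter (fun τ => term τ = y), pB τ' * r y := by
        rw [← sum_mul, ← fiberSum, hpB, one_mul]
    _ = fiberSum term pB x * ∑ τ' ∈ univ.filter (fun τ => term τ = y), pF τ' * r x := by
        simp only [fiberSum, sum_mul_sum]
        exact sum_congr rfl fun τ hτ => sum_congr rfl fun τ' hτ' => hpair τ hτ τ' hτ'
    _ = r x * fiberSum term pF y := by
        rw [hpB, one_mul, ← sum_mul, ← fiberSum, mul_comm]

theorem fiberSum_eq_div_sum [Fintype X] {term : T → X} {p : T → ℝ} {r : X → ℝ}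
    (hr : ∀ x, 0 < r x) (hp : ∑ τ, p τ = 1)
    (hprop : ∀ x y, fiberSum term p x * r y = r x * fiberSum term p y) (x : X) :
    fiberSum term p x = r x / ∑ y, r y := by
  have hsum : 0 < ∑ y, r y :=
    (hr x).trans_le (single_le_sum (fun y _ => (hr y).le) (mem_univ x))
  rw [eq_div_iff hsum.ne', mul_sum]
  simp only [hprop x, ← mul_sum, sum_fiberSum, hp, mul_one]

theorem contrastive_balance_loss_sufficiency_general
    {T X : Type} [Fintype T] [Fintype X] [DecidableEq X]
    (term : T → X)
    (pF pB : T → ℝ) (R : X → ℝ)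
    (hpF_pos : ∀ τ, 0 < pF τ) (hpF_sum : ∑ τ, pF τ = 1)
    (hpB_pos : ∀ τ, 0 < pB τ)
    (hpB_sum : ∀ x, ∑ τ ∈ univ.filter (fun τ => term τ = x), pB τ = 1)
    (hR : ∀ x, 0 < R x)
    (ν : T → T → ℝ) (hν_pos : ∀ τ τ', 0 < ν τ τ')
    (L : T → T → ℝ)
    (hL : ∀ τ τ', L τ τ' =
      (Real.log (pF τ / pB τ) - Real.log (pF τ' / pB τ')
        + Real.log (R (term τ') / R (term τ))) ^ 2)
    (hzero : ∑ τ, ∑ τ', ν τ τ' * L τ τ' = 0) :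
    ∀ x, ∑ τ ∈ univ.filter (fun τ => term τ = x), pF τ = R x / ∑ y, R y := by
  have hL_zero :=
    eq_zero_of_sum_sum_mul_eq_zero hν_pos (fun τ τ' => hL τ τ' ▸ sq_nonneg _) hzero
  have hbalance (τ τ' : T) : pF τ * pB τ' * R (term τ') = pF τ' * pB τ * R (term τ) :=
    Real.mul_mul_eq_of_log_div_sub_log_div_add_log_div_eq_zero (hpF_pos τ) (hpB_pos τ)
      (hR _) (hpF_pos τ') (hpB_pos τ') (hR _)
      (pow_eq_zero_iff two_ne_zero |>.1 (hL τ τ' ▸ hL_zero τ τ'))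
  exact fiberSum_eq_div_sum hR hpF_sum (fiberSum_mul_eq_mul_fiberSum hpB_sum hbalance)

/-- Contrastive balance loss (Corollary, sufficiency direction). -/
theorem contrastive_balance_loss_sufficiency
    {T X : Type} [Fintype T] [Fintype X] [Nonempty T] [Nonempty X] [DecidableEq X]
    (term : T → X) (hsurj : Function.Surjective term)
    (pF pB : T → ℝ) (R : X → ℝ)
    (hpF_pos : ∀ τ, 0 < pF τ) (hpF_sum : ∑ τ, pF τ = 1)
    (hpB_pos : ∀ τ, 0 < pB τ)
    (hpB_sum : ∀ x, ∑ τ ∈ univ.filter (fun τ => term τ = x), pB τ = 1)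
    (hR : ∀ x, 0 < R x)
    (ν : T → T → ℝ) (hν_pos : ∀ τ τ', 0 < ν τ τ')
    (hν_sum : ∑ τ, ∑ τ', ν τ τ' = 1)
    (L : T → T → ℝ)
    (hL : ∀ τ τ', L τ τ' =
      (Real.log (pF τ / pB τ) - Real.log (pF τ' / pB τ')
        + Real.log (R (term τ') / R (term τ))) ^ 2)
    (hzero : ∑ τ, ∑ τ', ν τ τ' * L τ τ' = 0) :
    ∀ x, ∑ τ ∈ univ.filter (fun τ => term τ = x), pF τ = R x / ∑ y, R y :=
  contrastive_balance_loss_sufficiency_general term pF pB R hpF_pos hpF_sum hpB_pos hpB_sum hR ν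
    hν_pos L hL hzero
end

section
/- Marginal of an aggregating-balanced model under imperfect local inference (Remark 1). If the aggregating balance condition holds for (pF₁,pB₁), …, (pF_N,pB_N) together with (pF, pB), then for all x ∈ 𝒳, p_T(x) = v(x)/Σ_{y∈𝒳} v(y), where v(x) := Σ_{τ : term(τ)=x} pB(τ)·∏_{n=1}^N pFₙ(τ)/pBₙ(τ) and p_T is the marginal of pF over terminal states. -/
open Finset

/-!
Dividing the aggregating balance condition by `∏ₙ pBₙ(τ) pBₙ(τ')` shows that
`pF(τ) w(τ') = pF(τ') w(τ)` for the positive weights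
`w(τ) = pB(τ) ∏ₙ pFₙ(τ)/pBₙ(τ)`, so `pF` is proportional to `w`; normalising gives
`pF = w / Σ w`, and summing over the fibre of `x` gives `p_T(x) = v(x) / Σ v`.
-/

section Proportional

variable {α : Type*} [Fintype α]

theorem eq_div_sum_of_mul_eq_mul {f w : α → ℝ} (hf : ∑ a, f a = 1) (hw : ∑ a, w a ≠ 0)
    (hfw : ∀ a b, f a * w b = f b * w a) (a : α) :
    f a = w a / ∑ b, w b := by
  rw [eq_div_iff hw]
  calc f a * ∑ b, w b = ∑ b, f b * w a := by
        rw [mul_sum]; exact sum_congr rfl fun b _ => hfw a b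
    _ = w a := by rw [← sum_mul, hf, one_mul]

end Proportional

section AggregatingBalance

variable {T ι : Type*} [Fintype ι]

noncomputable def aggregateWeight (pFn pBn : ι → T → ℝ) (pB : T → ℝ) (τ : T) : ℝ :=
  pB τ * ∏ n, pFn n τ / pBn n τ

theorem aggregateWeight_pos {pFn pBn : ι → T → ℝ} {pB : T → ℝ}
    (hpFn : ∀ n τ, 0 < pFn n τ) (hpBn : ∀ n τ, 0 < pBn n τ) (hpB : ∀ τ, 0 < pB τ)
    (τ : T) :
    0 < aggregateWeight pFn pBn pB τ :=
  mul_pos (hpB τ) (prod_pos fun n _ => div_pos (hpFn n τ) (hpBn n τ))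

theorem mul_aggregateWeight_comm_of_balance {pFn pBn : ι → T → ℝ} {pF pB : T → ℝ}
    (hpBn : ∀ n τ, pBn n τ ≠ 0)
    (hAB : ∀ τ τ', pF τ * pB τ' * ∏ n, (pBn n τ * pFn n τ') =
      pB τ * pF τ' * ∏ n, (pFn n τ * pBn n τ')) (τ τ' : T) :
    pF τ * aggregateWeight pFn pBn pB τ' = pF τ' * aggregateWeight pFn pBn pB τ := by
  have h := hAB τ τ'
  have h₁ : ∏ n, pBn n τ ≠ 0 := prod_ne_zero_iff.mpr fun n _ => hpBn n τ
  have h₂ : ∏ n, pBn n τ' ≠ 0 := prod_ne_zero_iff.mpr fun n _ => hpBn n τ'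
  rw [prod_mul_distrib, prod_mul_distrib] at h
  simp only [aggregateWeight, prod_div_distrib]
  field_simp
  linear_combination h

end AggregatingBalance

theorem aggregating_balance_marginal_imperfect_general
    {T X : Type} [Fintype T] [Fintype X] [DecidableEq X]
    (term : T → X)
    (N : ℕ) (pFn pBn : Fin N → T → ℝ)
    (pF pB : T → ℝ)
    (hpFn_pos : ∀ n τ, 0 < pFn n τ)
    (hpBn_pos : ∀ n τ, 0 < pBn n τ)
    (hpF_sum : ∑ τ, pF τ = 1)
    (hpB_pos : ∀ τ, 0 < pB τ)
    (hAB : ∀ τ τ', pF τ * pB τ' * ∏ n, (pBn n τ * pFn n τ') =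
      pB τ * pF τ' * ∏ n, (pFn n τ * pBn n τ'))
    (v : X → ℝ)
    (hv : ∀ x, v x = ∑ τ ∈ univ.filter (fun τ => term τ = x),
      pB τ * ∏ n, pFn n τ / pBn n τ) :
    ∀ x, ∑ τ ∈ univ.filter (fun τ => term τ = x), pF τ = v x / ∑ y, v y := by
  set w := aggregateWeight pFn pBn pB
  have hT : (univ : Finset T).Nonempty :=
    nonempty_of_sum_ne_zero (hpF_sum ▸ one_ne_zero)
  have hS : 0 < ∑ τ, w τ :=
    sum_pos (fun τ _ => aggregateWeight_pos hpFn_pos hpBn_pos hpB_pos τ) hT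
  have hpF : ∀ τ, pF τ = w τ / ∑ τ', w τ' := eq_div_sum_of_mul_eq_mul hpF_sum hS.ne'
    (mul_aggregateWeight_comm_of_balance (fun n τ => (hpBn_pos n τ).ne') hAB)
  have hv_sum : ∑ y, v y = ∑ τ, w τ := by
    rw [← sum_fiberwise univ term w]
    exact sum_congr rfl fun y _ => hv y
  intro x
  rw [hv x, hv_sum, sum_div]
  exact sum_congr rfl fun τ _ => hpF τ

/-- Marginal of an aggregating-balanced model under imperfect local
inference (Remark 1). -/
theorem aggregating_balance_marginal_imperfect
    {T X : Type} [Fintype T] [Fintype X] [Nonempty T] [Nonempty X] [DecidableEq X]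
    (term : T → X) (hsurj : Function.Surjective term)
    (N : ℕ) (pFn pBn : Fin N → T → ℝ)
    (pF pB : T → ℝ)
    (hpFn_pos : ∀ n τ, 0 < pFn n τ) (hpFn_sum : ∀ n, ∑ τ, pFn n τ = 1)
    (hpBn_pos : ∀ n τ, 0 < pBn n τ)
    (hpBn_sum : ∀ n x, ∑ τ ∈ univ.filter (fun τ => term τ = x), pBn n τ = 1)
    (hpF_pos : ∀ τ, 0 < pF τ) (hpF_sum : ∑ τ, pF τ = 1)
    (hpB_pos : ∀ τ, 0 < pB τ)
    (hpB_sum : ∀ x, ∑ τ ∈ univ.filter (fun τ => term τ = x), pB τ = 1)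
    (hAB : ∀ τ τ', pF τ * pB τ' * ∏ n, (pBn n τ * pFn n τ') =
      pB τ * pF τ' * ∏ n, (pFn n τ * pBn n τ'))
    (v : X → ℝ)
    (hv : ∀ x, v x = ∑ τ ∈ univ.filter (fun τ => term τ = x),
      pB τ * ∏ n, pFn n τ / pBn n τ) :
    ∀ x, ∑ τ ∈ univ.filter (fun τ => term τ = x), pF τ = v x / ∑ y, v y :=
  aggregating_balance_marginal_imperfect_general term N pFn pBn pF pB hpFn_pos hpBn_pos hpF_sum
    hpB_pos hAB v hv
end

section
/- Forward KL half-bound in the proof of Theorem 2. For n = 1, …, N let πₙ(x) = Rₙ(x)/Σ_{y} Rₙ(y), and suppose there are αₙ ∈ (0,1) and βₙ > 0 with (1 − αₙ)·pBₙ(τ)·πₙ(term(τ)) ≤ pFₙ(τ) ≤ (1 + βₙ)·pBₙ(τ)·πₙ(term(τ)) for all τ ∈ 𝒯. Let pB be any backward policy. With u(x) = ∏_{n=1}^N πₙ(x), π(x) = u(x)/Σ_y u(y), v(x) = Σ_{τ : term(τ)=x} pB(τ)·∏_{n=1}^N pFₙ(τ)/pBₙ(τ), and π̂(x) = v(x)/Σ_y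 v(y), it holds that Σ_{x∈𝒳} π(x)·log(π(x)/π̂(x)) ≤ log(Σ_x v(x)/Σ_x u(x)) + Σ_{n=1}^N log(1/(1 − αₙ)). -/
/-!
The lower bounds `(1 - αₙ) pBₙ πₙ ≤ pFₙ` multiply to `c · u(x) ≤ v(x)` with `c = ∏ (1 - αₙ)`,
after averaging against `pB` over the trajectories ending in `x`. Normalising, this gives
`π(x) ≤ (Σ v / (c Σ u)) · π̂(x)`, and a density-ratio bound `π ≤ M π̂` bounds `KL(π ‖ π̂)` by `log M`.
-/

open Finset

namespace Finset

variable {ι : Type*} {s : Finset ι}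

theorem le_sum_mul_of_forall_le {w f : ι → ℝ} {a : ℝ} (hw : ∀ i ∈ s, 0 ≤ w i)
    (hw_sum : ∑ i ∈ s, w i = 1) (h : ∀ i ∈ s, a ≤ f i) : a ≤ ∑ i ∈ s, w i * f i :=
  calc a = ∑ i ∈ s, w i * a := by rw [← sum_mul, hw_sum, one_mul]
    _ ≤ ∑ i ∈ s, w i * f i := sum_le_sum fun i hi => mul_le_mul_of_nonneg_left (h i hi) (hw i hi)

theorem prod_mul_prod_le_prod_div {a b π f : ι → ℝ} (ha : ∀ i ∈ s, 0 ≤ a i)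
    (hπ : ∀ i ∈ s, 0 ≤ π i) (hb : ∀ i ∈ s, 0 < b i) (h : ∀ i ∈ s, a i * (b i * π i) ≤ f i) :
    (∏ i ∈ s, a i) * ∏ i ∈ s, π i ≤ ∏ i ∈ s, f i / b i := by
  rw [← prod_mul_distrib]
  refine prod_le_prod (fun i hi => mul_nonneg (ha i hi) (hπ i hi)) fun i hi => ?_
  rw [le_div_iff₀ (hb i hi)]
  linarith [h i hi]

theorem sum_mul_log_div_le_log_of_le_mul {p q : ι → ℝ} {M : ℝ} (hp : ∀ i ∈ s, 0 < p i)
    (hq : ∀ i ∈ s, 0 < q i) (hpq : ∀ i ∈ s, p i ≤ M * q i) (hp_sum : ∑ i ∈ s, p i = 1) :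
    ∑ i ∈ s, p i * Real.log (p i / q i) ≤ Real.log M :=
  calc ∑ i ∈ s, p i * Real.log (p i / q i) ≤ ∑ i ∈ s, p i * Real.log M :=
        sum_le_sum fun i hi => mul_le_mul_of_nonneg_left
          (Real.log_le_log (div_pos (hp i hi) (hq i hi)) ((div_le_iff₀ (hq i hi)).2 (hpq i hi)))
          (hp i hi).le
    _ = Real.log M := by rw [← sum_mul, hp_sum, one_mul]

theorem log_div_prod {a : ℝ} {c : ι → ℝ} (ha : a ≠ 0) (hc : ∀ i ∈ s, c i ≠ 0) :
    Real.log (a / ∏ i ∈ s, c i) = Real.log a + ∑ i ∈ s, Real.log (1 / c i) := by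
  simp only [Real.log_div ha (prod_ne_zero_iff.2 hc), Real.log_prod hc, one_div, Real.log_inv,
    sum_neg_distrib, sub_eq_add_neg]

end Finset

theorem forward_kl_half_bound_general
    {T X : Type} [Fintype T] [Fintype X] [Nonempty X] [DecidableEq X]
    (term : T → X)
    (N : ℕ) (pFn pBn : Fin N → T → ℝ) (Rn : Fin N → X → ℝ)
    (hpBn_pos : ∀ n τ, 0 < pBn n τ)
    (hRn_pos : ∀ n x, 0 < Rn n x)
    (pB : T → ℝ) (hpB_pos : ∀ τ, 0 < pB τ)
    (hpB_sum : ∀ x, ∑ τ ∈ univ.filter (fun τ => term τ = x), pB τ = 1)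
    (α : Fin N → ℝ) (hα : ∀ n, α n ∈ Set.Ioo (0 : ℝ) 1)
    (piL : Fin N → X → ℝ) (hpiL : ∀ n x, piL n x = Rn n x / ∑ y, Rn n y)
    (hlower : ∀ n τ, (1 - α n) * (pBn n τ * piL n (term τ)) ≤ pFn n τ)
    (u : X → ℝ) (hu : ∀ x, u x = ∏ n, piL n x)
    (piG : X → ℝ) (hpiG : ∀ x, piG x = u x / ∑ y, u y)
    (v : X → ℝ)
    (hv : ∀ x, v x = ∑ τ ∈ univ.filter (fun τ => term τ = x),
      pB τ * ∏ n, pFn n τ / pBn n τ)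
    (piH : X → ℝ) (hpiH : ∀ x, piH x = v x / ∑ y, v y) :
    ∑ x, piG x * Real.log (piG x / piH x) ≤
      Real.log ((∑ x, v x) / ∑ x, u x) + ∑ n, Real.log (1 / (1 - α n)) := by
  set c := ∏ n, (1 - α n)
  have h1α : ∀ n, 0 < 1 - α n := fun n => sub_pos.2 (hα n).2
  have hc : 0 < c := prod_pos fun n _ => h1α n
  have hpiL_pos : ∀ n x, 0 < piL n x := fun n x => by
    rw [hpiL]; exact div_pos (hRn_pos n x) (sum_pos (fun y _ => hRn_pos n y) univ_nonempty)
  have hu_pos : ∀ x, 0 < u x := fun x => by rw [hu]; exact prod_pos fun n _ => hpiL_pos n x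
  have hcuv : ∀ x, c * u x ≤ v x := fun x => by
    rw [hv, hu]
    refine le_sum_mul_of_forall_le (fun τ _ => (hpB_pos τ).le) (hpB_sum x) fun τ hτ => ?_
    rw [← (mem_filter.1 hτ).2]
    exact prod_mul_prod_le_prod_div (fun n _ => (h1α n).le) (fun n _ => (hpiL_pos n _).le)
      (fun n _ => hpBn_pos n τ) fun n _ => hlower n τ
  have hv_pos : ∀ x, 0 < v x := fun x => (mul_pos hc (hu_pos x)).trans_le (hcuv x)
  have hU : 0 < ∑ y, u y := sum_pos (fun y _ => hu_pos y) univ_nonempty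
  have hV : 0 < ∑ y, v y := sum_pos (fun y _ => hv_pos y) univ_nonempty
  have hratio : ∀ x, piG x ≤ (∑ y, v y) / ((∑ y, u y) * c) * piH x := fun x => by
    rw [hpiG, hpiH, div_mul_div_comm, mul_comm (∑ y, v y), mul_div_mul_right _ _ hV.ne',
      div_le_div_iff₀ hU (mul_pos hU hc)]
    nlinarith [hcuv x]
  have hpiG_sum : ∑ x, piG x = 1 := by simp only [hpiG, ← sum_div, div_self hU.ne']
  calc ∑ x, piG x * Real.log (piG x / piH x)
      ≤ Real.log ((∑ y, v y) / ((∑ y, u y) * c)) :=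
        sum_mul_log_div_le_log_of_le_mul (fun x _ => by rw [hpiG]; exact div_pos (hu_pos x) hU)
          (fun x _ => by rw [hpiH]; exact div_pos (hv_pos x) hV) (fun x _ => hratio x) hpiG_sum
    _ = _ := by
        rw [← div_div, log_div_prod (div_pos hV hU).ne' fun n _ => (h1α n).ne']

/-- Forward KL half-bound in the proof of Theorem 2. -/
theorem forward_kl_half_bound
    {T X : Type} [Fintype T] [Fintype X] [Nonempty T] [Nonempty X] [DecidableEq X]
    (term : T → X) (hsurj : Function.Surjective term)
    (N : ℕ) (pFn pBn : Fin N → T → ℝ) (Rn : Fin N → X → ℝ)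
    (hpFn_pos : ∀ n τ, 0 < pFn n τ) (hpFn_sum : ∀ n, ∑ τ, pFn n τ = 1)
    (hpBn_pos : ∀ n τ, 0 < pBn n τ)
    (hpBn_sum : ∀ n x, ∑ τ ∈ univ.filter (fun τ => term τ = x), pBn n τ = 1)
    (hRn_pos : ∀ n x, 0 < Rn n x)
    (pB : T → ℝ) (hpB_pos : ∀ τ, 0 < pB τ)
    (hpB_sum : ∀ x, ∑ τ ∈ univ.filter (fun τ => term τ = x), pB τ = 1)
    (α β : Fin N → ℝ) (hα : ∀ n, α n ∈ Set.Ioo (0 : ℝ) 1) (hβ : ∀ n, 0 < β n)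
    (piL : Fin N → X → ℝ) (hpiL : ∀ n x, piL n x = Rn n x / ∑ y, Rn n y)
    (hlower : ∀ n τ, (1 - α n) * (pBn n τ * piL n (term τ)) ≤ pFn n τ)
    (hupper : ∀ n τ, pFn n τ ≤ (1 + β n) * (pBn n τ * piL n (term τ)))
    (u : X → ℝ) (hu : ∀ x, u x = ∏ n, piL n x)
    (piG : X → ℝ) (hpiG : ∀ x, piG x = u x / ∑ y, u y)
    (v : X → ℝ)
    (hv : ∀ x, v x = ∑ τ ∈ univ.filter (fun τ => term τ = x),
      pB τ * ∏ n, pFn n τ / pBn n τ)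
    (piH : X → ℝ) (hpiH : ∀ x, piH x = v x / ∑ y, v y) :
    ∑ x, piG x * Real.log (piG x / piH x) ≤
      Real.log ((∑ x, v x) / ∑ x, u x) + ∑ n, Real.log (1 / (1 - α n)) :=
  forward_kl_half_bound_general term N pFn pBn Rn hpBn_pos hRn_pos pB hpB_pos hpB_sum α hα piL hpiL
    hlower u hu piG hpiG v hv piH hpiH
end

section
/- Reverse KL half-bound in the proof of Theorem 2. For n = 1, …, N let πₙ(x) = Rₙ(x)/Σ_{y} Rₙ(y), and suppose there are αₙ ∈ (0,1) and βₙ > 0 with (1 − αₙ)·pBₙ(τ)·πₙ(term(τ)) ≤ pFₙ(τ) ≤ (1 + βₙ)·pBₙ(τ)·πₙ(term(τ)) for all τ ∈ 𝒯. Let pB be any backward policy. With u(x) = ∏_{n=1}^N πₙ(x), π(x) = u(x)/Σ_y u(y), v(x) = Σ_{τ : term(τ)=x} pB(τ)·∏_{n=1}^N pFₙ(τ)/pBₙ(τ), and π̂(x) = v(x)/Σ_y v(y), it holds that Σ_{x∈𝒳} π̂(x)·log(π̂(x)/π(x)) ≤ log(Σ_x u(x)/Σ_x v(x)) + Σ_{n=1}^N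 log(1 + βₙ). -/
/-!
By the upper bounds, each trajectory's likelihood ratio `∏ₙ pFₙ/pBₙ` is at most `C · u (term τ)`
with `C = ∏ₙ (1 + βₙ)`, and averaging over a fibre with `pB` gives `v ≤ C · u`. Hence
`log (π̂ x / π x) = log (∑ u / ∑ v) + log (v x / u x) ≤ log (∑ u / ∑ v) + log C` pointwise, and
averaging against the probability vector `π̂` gives the bound.
-/

open Finset

theorem sum_filter_mul_le_of_sum_eq_one {T X : Type*} [Fintype T] [DecidableEq X]
    (term : T → X) {w f : T → ℝ} {g : X → ℝ} (x : X) (hw : ∀ τ, 0 ≤ w τ)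
    (hw_sum : ∑ τ ∈ univ.filter (fun τ => term τ = x), w τ = 1)
    (hf : ∀ τ, f τ ≤ g (term τ)) :
    ∑ τ ∈ univ.filter (fun τ => term τ = x), w τ * f τ ≤ g x :=
  calc ∑ τ ∈ univ.filter (fun τ => term τ = x), w τ * f τ
      ≤ ∑ τ ∈ univ.filter (fun τ => term τ = x), w τ * g x :=
        sum_le_sum fun τ hτ => by
          rw [← (mem_filter.mp hτ).2]
          exact mul_le_mul_of_nonneg_left (hf τ) (hw τ)
    _ = g x := by rw [← sum_mul, hw_sum, one_mul]

theorem sum_div_sum_mul_log_div_le_of_le_mul {X : Type*} [Fintype X] [Nonempty X]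
    {u v : X → ℝ} {C : ℝ} (hu : ∀ x, 0 < u x) (hv : ∀ x, 0 < v x)
    (hvu : ∀ x, v x ≤ C * u x) :
    ∑ x, (v x / ∑ y, v y) * Real.log ((v x / ∑ y, v y) / (u x / ∑ y, u y)) ≤
      Real.log ((∑ x, u x) / ∑ x, v x) + Real.log C := by
  have hSu : 0 < ∑ y, u y := sum_pos (fun y _ => hu y) univ_nonempty
  have hSv : 0 < ∑ y, v y := sum_pos (fun y _ => hv y) univ_nonempty
  have hlog_le : ∀ x, Real.log ((v x / ∑ y, v y) / (u x / ∑ y, u y)) ≤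
      Real.log ((∑ x, u x) / ∑ x, v x) + Real.log C := fun x => by
    have hratio :
        (v x / ∑ y, v y) / (u x / ∑ y, u y) = (∑ y, u y) / (∑ y, v y) * (v x / u x) := by
      field_simp
    rw [hratio, Real.log_mul (div_pos hSu hSv).ne' (div_pos (hv x) (hu x)).ne']
    gcongr
    · exact div_pos (hv x) (hu x)
    · exact (div_le_iff₀ (hu x)).mpr (hvu x)
  calc ∑ x, (v x / ∑ y, v y) * Real.log ((v x / ∑ y, v y) / (u x / ∑ y, u y))
      ≤ ∑ x, (v x / ∑ y, v y) * (Real.log ((∑ x, u x) / ∑ x, v x) + Real.log C) :=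
        sum_le_sum fun x _ => mul_le_mul_of_nonneg_left (hlog_le x) (div_pos (hv x) hSv).le
    _ = Real.log ((∑ x, u x) / ∑ x, v x) + Real.log C := by
        rw [← sum_mul, ← sum_div, div_self hSv.ne', one_mul]

theorem reverse_kl_half_bound_general
    {T X : Type} [Fintype T] [Fintype X] [Nonempty X] [DecidableEq X]
    (term : T → X) (hsurj : Function.Surjective term)
    (N : ℕ) (pFn pBn : Fin N → T → ℝ) (Rn : Fin N → X → ℝ)
    (hpFn_pos : ∀ n τ, 0 < pFn n τ)
    (hpBn_pos : ∀ n τ, 0 < pBn n τ)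
    (hRn_pos : ∀ n x, 0 < Rn n x)
    (pB : T → ℝ) (hpB_pos : ∀ τ, 0 < pB τ)
    (hpB_sum : ∀ x, ∑ τ ∈ univ.filter (fun τ => term τ = x), pB τ = 1)
    (β : Fin N → ℝ) (hβ : ∀ n, 0 < β n)
    (piL : Fin N → X → ℝ) (hpiL : ∀ n x, piL n x = Rn n x / ∑ y, Rn n y)
    (hupper : ∀ n τ, pFn n τ ≤ (1 + β n) * (pBn n τ * piL n (term τ)))
    (u : X → ℝ) (hu : ∀ x, u x = ∏ n, piL n x)
    (piG : X → ℝ) (hpiG : ∀ x, piG x = u x / ∑ y, u y)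
    (v : X → ℝ)
    (hv : ∀ x, v x = ∑ τ ∈ univ.filter (fun τ => term τ = x),
      pB τ * ∏ n, pFn n τ / pBn n τ)
    (piH : X → ℝ) (hpiH : ∀ x, piH x = v x / ∑ y, v y) :
    ∑ x, piH x * Real.log (piH x / piG x) ≤
      Real.log ((∑ x, u x) / ∑ x, v x) + ∑ n, Real.log (1 + β n) := by
  have hpiL_pos : ∀ n x, 0 < piL n x := fun n x => by
    rw [hpiL]
    exact div_pos (hRn_pos n x) (sum_pos (fun y _ => hRn_pos n y) univ_nonempty)
  have hu_pos : ∀ x, 0 < u x := fun x => by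
    rw [hu]
    exact prod_pos fun n _ => hpiL_pos n x
  have hratio_pos : ∀ τ, 0 < ∏ n, pFn n τ / pBn n τ := fun τ =>
    prod_pos fun n _ => div_pos (hpFn_pos n τ) (hpBn_pos n τ)
  have hv_pos : ∀ x, 0 < v x := fun x => by
    obtain ⟨τ, rfl⟩ := hsurj x
    rw [hv]
    exact sum_pos (fun τ _ => mul_pos (hpB_pos τ) (hratio_pos τ)) ⟨τ, by simp⟩
  have hratio_le :
      ∀ τ, ∏ n, pFn n τ / pBn n τ ≤ (∏ n, (1 + β n)) * u (term τ) := fun τ => by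
    rw [hu, ← prod_mul_distrib]
    refine prod_le_prod (fun n _ => (div_pos (hpFn_pos n τ) (hpBn_pos n τ)).le) fun n _ => ?_
    rw [div_le_iff₀ (hpBn_pos n τ)]
    linarith [hupper n τ]
  have hvu : ∀ x, v x ≤ (∏ n, (1 + β n)) * u x := fun x => by
    rw [hv]
    exact sum_filter_mul_le_of_sum_eq_one term x (fun τ => (hpB_pos τ).le) (hpB_sum x)
      (g := fun x => (∏ n, (1 + β n)) * u x) hratio_le
  obtain rfl : piH = fun x => v x / ∑ y, v y := funext hpiH
  obtain rfl : piG = fun x => u x / ∑ y, u y := funext hpiG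
  rw [← Real.log_prod fun n _ => (by linarith [hβ n] : 1 + β n ≠ 0)]
  exact sum_div_sum_mul_log_div_le_of_le_mul hu_pos hv_pos hvu

/-- Reverse KL half-bound in the proof of Theorem 2. -/
theorem reverse_kl_half_bound
    {T X : Type} [Fintype T] [Fintype X] [Nonempty T] [Nonempty X] [DecidableEq X]
    (term : T → X) (hsurj : Function.Surjective term)
    (N : ℕ) (pFn pBn : Fin N → T → ℝ) (Rn : Fin N → X → ℝ)
    (hpFn_pos : ∀ n τ, 0 < pFn n τ) (hpFn_sum : ∀ n, ∑ τ, pFn n τ = 1)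
    (hpBn_pos : ∀ n τ, 0 < pBn n τ)
    (hpBn_sum : ∀ n x, ∑ τ ∈ univ.filter (fun τ => term τ = x), pBn n τ = 1)
    (hRn_pos : ∀ n x, 0 < Rn n x)
    (pB : T → ℝ) (hpB_pos : ∀ τ, 0 < pB τ)
    (hpB_sum : ∀ x, ∑ τ ∈ univ.filter (fun τ => term τ = x), pB τ = 1)
    (α β : Fin N → ℝ) (hα : ∀ n, α n ∈ Set.Ioo (0 : ℝ) 1) (hβ : ∀ n, 0 < β n)
    (piL : Fin N → X → ℝ) (hpiL : ∀ n x, piL n x = Rn n x / ∑ y, Rn n y)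
    (hlower : ∀ n τ, (1 - α n) * (pBn n τ * piL n (term τ)) ≤ pFn n τ)
    (hupper : ∀ n τ, pFn n τ ≤ (1 + β n) * (pBn n τ * piL n (term τ)))
    (u : X → ℝ) (hu : ∀ x, u x = ∏ n, piL n x)
    (piG : X → ℝ) (hpiG : ∀ x, piG x = u x / ∑ y, u y)
    (v : X → ℝ)
    (hv : ∀ x, v x = ∑ τ ∈ univ.filter (fun τ => term τ = x),
      pB τ * ∏ n, pFn n τ / pBn n τ)
    (piH : X → ℝ) (hpiH : ∀ x, piH x = v x / ∑ y, v y) :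
    ∑ x, piH x * Real.log (piH x / piG x) ≤
      Real.log ((∑ x, u x) / ∑ x, v x) + ∑ n, Real.log (1 + β n) :=
  reverse_kl_half_bound_general term hsurj N pFn pBn Rn hpFn_pos hpBn_pos hRn_pos pB hpB_pos hpB_sum
    β hβ piL hpiL hupper u hu piG hpiG v hv piH hpiH
end

section
/- Variational inference and contrastive balance (Theorem 3). Let d ∈ ℕ and let pF : ℝ^d → 𝒯 → ℝ satisfy, for every θ ∈ ℝ^d: pF(θ)(τ) > 0 for all τ, Σ_{τ∈𝒯} pF(θ)(τ) = 1, and θ ↦ pF(θ)(τ) is differentiable for each τ. Let pB be a backward policy and R a reward, and define the probability q(τ) = R(term(τ))·pB(τ)/Σ_{x∈𝒳} R(x) on 𝒯. Define the KL divergence D(θ) = Σ_{τ} pF(θ)(τ)·log(pF(θ)(τ)/q(τ)) and the contrastive balance loss L_CB(τ,τ',θ) = (log(pF(θ)(τ)/pB(τ)) − log(pF(θ)(τ')/pB(τ')) + log(R(term(τ'))/R(term(τ))))². Then for every θ ∈ ℝ^d, the gradient satisfies ∇_θ D(θ) = (1/4)·Σ_{(τ,τ')∈𝒯×𝒯} pF(θ)(τ)·pF(θ)(τ')·∇_θ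 L_CB(τ,τ',θ). -/
/-!
Write `a τ = log (pF τ / q τ)`. Since `∑ τ, pF τ = 1` for all `θ`, the derivatives `∇pF τ` sum to
zero, so `∇D = ∑ τ, a τ • ∇pF τ`. The contrastive residual is `a τ - a τ'` (the normaliser of `q`
cancels), so `∇L τ τ' = 2 (a τ - a τ') • (∇log pF τ - ∇log pF τ')`. Its `pF ⊗ pF`-average is twice
the covariance of `a` and `∇log pF` under `pF`, and as `𝔼_pF[∇log pF] = ∑ τ, ∇pF τ = 0` that
covariance is `∑ τ, a τ • ∇pF τ`.
-/

open Finset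

theorem sum_sum_mul_smul_sub_smul_sub {ι R M : Type*} [Fintype ι] [CommRing R]
    [AddCommGroup M] [Module R M] (w a : ι → R) (v : ι → M) (hw : ∑ i, w i = 1) :
    ∑ i, ∑ j, (w i * w j) • ((a i - a j) • (v i - v j)) =
      (2 : R) • (∑ i, (w i * a i) • v i - (∑ i, w i * a i) • ∑ i, w i • v i) := by
  have expand : ∀ i j, (w i * w j) • ((a i - a j) • (v i - v j)) =
      w j • ((w i * a i) • v i) + w i • ((w j * a j) • v j)
        - (w i * a i) • (w j • v j) - (w j * a j) • (w i • v i) := by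
    intro i j
    simp only [smul_sub, sub_smul, smul_smul]
    module
  simp only [expand, sum_add_distrib, sum_sub_distrib, ← sum_smul, ← smul_sum, hw, one_smul]
  module

section Calculus

variable {E ι : Type*} [NormedAddCommGroup E] [NormedSpace ℝ E]
  {p : E → ι → ℝ} {θ : E}

theorem sum_fderiv_eq_zero_of_sum_const [Fintype ι] (c : ℝ) (hsum : ∀ θ, ∑ i, p θ i = c)
    (hdiff : ∀ i, DifferentiableAt ℝ (fun θ => p θ i) θ) :
    ∑ i, fderiv ℝ (fun θ => p θ i) θ = 0 := by
  rw [← fderiv_fun_sum fun i _ => hdiff i]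
  simp only [hsum, fderiv_const_apply]

theorem hasFDerivAt_sq_log_sub_log (c : ι → ℝ) (i j : ι)
    (hpos : ∀ i, 0 < p θ i) (hdiff : ∀ i, DifferentiableAt ℝ (fun θ => p θ i) θ) :
    HasFDerivAt (fun θ => (Real.log (p θ i) - c i - (Real.log (p θ j) - c j)) ^ 2)
      ((2 * (Real.log (p θ i) - c i - (Real.log (p θ j) - c j))) •
        ((p θ i)⁻¹ • fderiv ℝ (fun θ => p θ i) θ - (p θ j)⁻¹ • fderiv ℝ (fun θ => p θ j) θ)) θ := by
  have hlog : ∀ k, HasFDerivAt (fun θ => Real.log (p θ k) - c k)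
      ((p θ k)⁻¹ • fderiv ℝ (fun θ => p θ k) θ) θ := fun k =>
    ((hdiff k).hasFDerivAt.log (hpos k).ne').sub_const (c k)
  refine (((hlog i).fun_sub (hlog j)).pow 2).congr_fderiv ?_
  norm_num

theorem hasFDerivAt_sum_mul_log_sub [Fintype ι] (c : ι → ℝ)
    (hpos : ∀ i, 0 < p θ i) (hdiff : ∀ i, DifferentiableAt ℝ (fun θ => p θ i) θ) :
    HasFDerivAt (fun θ => ∑ i, p θ i * (Real.log (p θ i) - c i))
      (∑ i, (Real.log (p θ i) - c i + 1) • fderiv ℝ (fun θ => p θ i) θ) θ := by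
  refine HasFDerivAt.fun_sum fun i _ => ?_
  have hlog := ((hdiff i).hasFDerivAt.log (hpos i).ne').sub_const (c i)
  refine ((hdiff i).hasFDerivAt.fun_mul hlog).congr_fderiv ?_
  rw [smul_smul, mul_inv_cancel₀ (hpos i).ne']
  module

theorem fderiv_sum_mul_log_sub_eq [Fintype ι] (c : ι → ℝ) (hsum : ∀ θ, ∑ i, p θ i = 1)
    (hpos : ∀ i, 0 < p θ i) (hdiff : ∀ i, DifferentiableAt ℝ (fun θ => p θ i) θ) :
    fderiv ℝ (fun θ => ∑ i, p θ i * (Real.log (p θ i) - c i)) θ =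
      (1 / 4 : ℝ) • ∑ i, ∑ j, (p θ i * p θ j) •
        fderiv ℝ (fun θ => (Real.log (p θ i) - c i - (Real.log (p θ j) - c j)) ^ 2) θ := by
  rw [(hasFDerivAt_sum_mul_log_sub c hpos hdiff).fderiv]
  simp only [fun i j => (hasFDerivAt_sq_log_sub_log c i j hpos hdiff).fderiv]
  set a := fun i => Real.log (p θ i) - c i
  set v := fun i => fderiv ℝ (fun θ => p θ i) θ
  have hv : ∑ i, v i = 0 := sum_fderiv_eq_zero_of_sum_const 1 hsum hdiff
  have hcancel : ∀ i, p θ i • (p θ i)⁻¹ • v i = v i := fun i => by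
    rw [smul_smul, mul_inv_cancel₀ (hpos i).ne', one_smul]
  have hcancel_mul : ∀ i (b : ℝ), (p θ i * b) • (p θ i)⁻¹ • v i = b • v i := fun i b => by
    rw [mul_comm, mul_smul, hcancel]
  have hcov := sum_sum_mul_smul_sub_smul_sub (fun i => p θ i) a (fun i => (p θ i)⁻¹ • v i)
    (hsum θ)
  simp only [hcancel, hcancel_mul, hv, smul_zero, sub_zero] at hcov
  have hrhs : ∀ i j, (p θ i * p θ j) • (2 * (a i - a j)) • ((p θ i)⁻¹ • v i - (p θ j)⁻¹ • v j)
      = (2 : ℝ) • (p θ i * p θ j) • (a i - a j) • ((p θ i)⁻¹ • v i - (p θ j)⁻¹ • v j) :=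
    fun i j => by module
  calc ∑ i, (a i + 1) • v i = ∑ i, a i • v i := by
        simp only [add_smul, one_smul, sum_add_distrib, hv, add_zero]
    _ = (1 / 4 : ℝ) • ∑ i, ∑ j, (p θ i * p θ j) • (2 * (a i - a j)) •
          ((p θ i)⁻¹ • v i - (p θ j)⁻¹ • v j) := by
        simp only [hrhs, ← smul_sum]
        rw [hcov, smul_smul, smul_smul]
        norm_num

end Calculus

theorem vi_and_contrastive_balance_general
    {T X : Type} [Fintype T] [Fintype X] [Nonempty X]
    (term : T → X)
    (d : ℕ)
    (pF : EuclideanSpace ℝ (Fin d) → T → ℝ)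
    (hpF_pos : ∀ θ τ, 0 < pF θ τ)
    (hpF_sum : ∀ θ, ∑ τ, pF θ τ = 1)
    (hpF_diff : ∀ τ, Differentiable ℝ (fun θ => pF θ τ))
    (pB : T → ℝ) (hpB_pos : ∀ τ, 0 < pB τ)
    (R : X → ℝ) (hR : ∀ x, 0 < R x)
    (q : T → ℝ) (hq : ∀ τ, q τ = R (term τ) * pB τ / ∑ x, R x)
    (D : EuclideanSpace ℝ (Fin d) → ℝ)
    (hD : ∀ θ, D θ = ∑ τ, pF θ τ * Real.log (pF θ τ / q τ))
    (L : T → T → EuclideanSpace ℝ (Fin d) → ℝ)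
    (hL : ∀ τ τ' θ, L τ τ' θ =
      (Real.log (pF θ τ / pB τ) - Real.log (pF θ τ' / pB τ')
        + Real.log (R (term τ') / R (term τ))) ^ 2) :
    ∀ θ, gradient D θ =
      (1 / 4 : ℝ) • ∑ τ, ∑ τ', (pF θ τ * pF θ τ') • gradient (L τ τ') θ := by
  intro θ
  have hZ : 0 < ∑ x, R x := sum_pos (fun x _ => hR x) univ_nonempty
  have hq_pos : ∀ τ, 0 < q τ := fun τ => hq τ ▸ div_pos (mul_pos (hR _) (hpB_pos τ)) hZ
  have hD_eq : D = fun θ => ∑ τ, pF θ τ * (Real.log (pF θ τ) - Real.log (q τ)) := by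
    ext θ
    simp only [hD, Real.log_div (hpF_pos θ _).ne' (hq_pos _).ne']
  have hL_eq : ∀ τ τ', L τ τ' = fun θ =>
      (Real.log (pF θ τ) - Real.log (q τ) - (Real.log (pF θ τ') - Real.log (q τ'))) ^ 2 := by
    intro τ τ'
    ext θ
    simp only [hL, hq, Real.log_div (hpF_pos θ _).ne' (hpB_pos _).ne',
      Real.log_div (hR _).ne' (hR _).ne',
      Real.log_div (mul_pos (hR _) (hpB_pos _)).ne' hZ.ne',
      Real.log_mul (hR _).ne' (hpB_pos _).ne']
    ring
  simp only [gradient, hD_eq, hL_eq,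
    fderiv_sum_mul_log_sub_eq _ hpF_sum (hpF_pos θ) fun τ => hpF_diff τ θ, map_smul, map_sum]

/-- Variational inference and contrastive balance (Theorem 3). -/
theorem vi_and_contrastive_balance
    {T X : Type} [Fintype T] [Fintype X] [Nonempty T] [Nonempty X] [DecidableEq X]
    (term : T → X) (hsurj : Function.Surjective term)
    (d : ℕ)
    (pF : EuclideanSpace ℝ (Fin d) → T → ℝ)
    (hpF_pos : ∀ θ τ, 0 < pF θ τ)
    (hpF_sum : ∀ θ, ∑ τ, pF θ τ = 1)
    (hpF_diff : ∀ τ, Differentiable ℝ (fun θ => pF θ τ))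
    (pB : T → ℝ) (hpB_pos : ∀ τ, 0 < pB τ)
    (hpB_sum : ∀ x, ∑ τ ∈ univ.filter (fun τ => term τ = x), pB τ = 1)
    (R : X → ℝ) (hR : ∀ x, 0 < R x)
    (q : T → ℝ) (hq : ∀ τ, q τ = R (term τ) * pB τ / ∑ x, R x)
    (D : EuclideanSpace ℝ (Fin d) → ℝ)
    (hD : ∀ θ, D θ = ∑ τ, pF θ τ * Real.log (pF θ τ / q τ))
    (L : T → T → EuclideanSpace ℝ (Fin d) → ℝ)
    (hL : ∀ τ τ' θ, L τ τ' θ =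
      (Real.log (pF θ τ / pB τ) - Real.log (pF θ τ' / pB τ')
        + Real.log (R (term τ') / R (term τ))) ^ 2) :
    ∀ θ, gradient D θ =
      (1 / 4 : ℝ) • ∑ τ, ∑ τ', (pF θ τ * pF θ τ') • gradient (L τ τ') θ :=
  vi_and_contrastive_balance_general term d pF hpF_pos hpF_sum hpF_diff pB hpB_pos R hR q hq D hD L
    hL
end

section
/- Variational inference and contrastive balance with a parameterized backward policy (appendix theorem). Let d ∈ ℕ and let pB : ℝ^d → 𝒯 → ℝ satisfy, for every θ ∈ ℝ^d: pB(θ)(τ) > 0 for all τ, Σ_{τ : term(τ)=x} pB(θ)(τ) = 1 for every x ∈ 𝒳, and θ ↦ pB(θ)(τ) is differentiable for each τ. Let pF be a (fixed) forward policy and R a reward, and define the probability μ_θ(τ) = R(term(τ))·pB(θ)(τ)/Σ_{x∈𝒳} R(x) on 𝒯. Define D(θ) = Σ_{τ} μ_θ(τ)·log(μ_θ(τ)/pF(τ)) and L_CB(τ,τ',θ) = (log(pF(τ)/pB(θ)(τ)) − log(pF(τ')/pB(θ)(τ')) + log(R(term(τ'))/R(term(τ))))². Then for every θ ∈ ℝ^d,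 ∇_θ D(θ) = (1/4)·Σ_{(τ,τ')∈𝒯×𝒯} μ_θ(τ)·μ_θ(τ')·∇_θ L_CB(τ,τ',θ). -/
/-!
Write `h τ = log (μ τ / pF τ)` and `g τ = ∇ h τ = ∇ log pB τ`. Since `∑ τ, μ τ ≡ 1`, the
derivatives `∇ μ τ = μ τ • g τ` sum to zero, so `∇ D = ∑ τ, μ τ h τ • g τ`. The normalizing
constant cancels in `L τ τ' = (h τ - h τ')²`, and the covariance identity
`∑ μ μ' (h - h') (g - g') = 2 (E[h g] - E[h] E[g])`, with `E[g] = 0`, turns the contrastive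
side into the same sum.
-/

open Finset

theorem sum_sum_mul_smul_sub_smul_sub_s17 {T R M : Type*} [Fintype T] [CommRing R]
    [AddCommGroup M] [Module R M] (μ f : T → R) (g : T → M) (hμ : ∑ τ, μ τ = 1) :
    ∑ τ, ∑ τ', (μ τ * μ τ') • ((f τ - f τ') • (g τ - g τ')) =
      (2 : R) • (∑ τ, (μ τ * f τ) • g τ - (∑ τ, μ τ * f τ) • ∑ τ, μ τ • g τ) := by
  have hexpand : ∀ τ τ', (μ τ * μ τ') • ((f τ - f τ') • (g τ - g τ')) =
      μ τ' • (μ τ * f τ) • g τ - (μ τ * f τ) • μ τ' • g τ'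
        - (μ τ' * f τ') • μ τ • g τ + μ τ • (μ τ' * f τ') • g τ' := fun τ τ' => by module
  simp only [hexpand, sum_add_distrib, sum_sub_distrib, ← sum_smul, ← smul_sum, hμ, one_smul]
  module

theorem sum_mul_eq_sum_of_sum_fiber_eq_one {T X R : Type*} [Fintype T] [Fintype X]
    [DecidableEq X] [CommSemiring R] (term : T → X) (p : T → R) (c : X → R)
    (hp : ∀ x, ∑ τ ∈ univ.filter (fun τ => term τ = x), p τ = 1) :
    ∑ τ, c (term τ) * p τ = ∑ x, c x := by
  rw [← sum_fiberwise univ term]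
  refine sum_congr rfl fun x _ => ?_
  rw [sum_congr rfl fun τ hτ => by rw [(mem_filter.mp hτ).2], ← mul_sum, hp, mul_one]

section Derivatives

variable {T E : Type*} [Fintype T] [NormedAddCommGroup E]

theorem sum_eq_zero_of_hasFDerivAt_of_sum_eq_const {𝕜 F : Type*} [NontriviallyNormedField 𝕜]
    [NormedAddCommGroup F] [NormedSpace 𝕜 F] [NormedSpace 𝕜 E] {q : E → T → F}
    {q' : T → E →L[𝕜] F} {θ : E} {c : F} (hq : ∀ τ, HasFDerivAt (fun θ => q θ τ) (q' τ) θ)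
    (hsum : ∀ θ, ∑ τ, q θ τ = c) : ∑ τ, q' τ = 0 := by
  have h := HasFDerivAt.fun_sum (u := univ) fun τ _ => hq τ
  simp only [hsum] at h
  exact h.unique (hasFDerivAt_const c θ)

theorem fderiv_sum_mul_log_div_eq [NormedSpace ℝ E] {μ : E → T → ℝ} {r : T → ℝ} {θ : E}
    (hdiff : ∀ τ, DifferentiableAt ℝ (fun θ => μ θ τ) θ) (hμ : ∀ τ, μ θ τ ≠ 0)
    (hsum : ∀ θ, ∑ τ, μ θ τ = 1) (hr : ∀ τ, r τ ≠ 0) :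
    fderiv ℝ (fun θ => ∑ τ, μ θ τ * Real.log (μ θ τ / r τ)) θ =
      (1 / 4 : ℝ) • ∑ τ, ∑ τ', (μ θ τ * μ θ τ') •
        fderiv ℝ (fun θ => (Real.log (μ θ τ / r τ) - Real.log (μ θ τ' / r τ')) ^ 2) θ := by
  set h : T → ℝ := fun τ => Real.log (μ θ τ / r τ)
  set g : T → StrongDual ℝ E := fun τ => (μ θ τ)⁻¹ • fderiv ℝ (fun θ => μ θ τ) θ
  have hμ' : ∀ τ, HasFDerivAt (fun θ => μ θ τ) (μ θ τ • g τ) θ := fun τ => by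
    simpa only [g, smul_smul, mul_inv_cancel₀ (hμ τ), one_smul] using (hdiff τ).hasFDerivAt
  have hh : ∀ τ, HasFDerivAt (fun θ => Real.log (μ θ τ / r τ)) (g τ) θ := fun τ => by
    have := ((hμ' τ).mul_const (r τ)⁻¹).log (by simp [hμ τ, hr τ])
    convert this using 1
    · simp only [div_eq_mul_inv]
    · match_scalars
      field_simp [hμ τ, hr τ]
  have hg : ∑ τ, μ θ τ • g τ = 0 := sum_eq_zero_of_hasFDerivAt_of_sum_eq_const hμ' hsum
  have hKL : HasFDerivAt (fun θ => ∑ τ, μ θ τ * Real.log (μ θ τ / r τ))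
      (∑ τ, (μ θ τ * h τ) • g τ) θ := by
    refine (HasFDerivAt.fun_sum (u := univ) fun τ _ => (hμ' τ).mul (hh τ)).congr_fderiv ?_
    rw [sum_add_distrib, hg, zero_add]
    exact sum_congr rfl fun τ _ => by rw [smul_smul, mul_comm]
  have hL : ∀ τ τ', HasFDerivAt
      (fun θ => (Real.log (μ θ τ / r τ) - Real.log (μ θ τ' / r τ')) ^ 2)
      ((2 : ℝ) • ((h τ - h τ') • (g τ - g τ'))) θ := fun τ τ' => by
    refine (((hh τ).sub (hh τ')).pow 2).congr_fderiv ?_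
    simp only [h, Pi.sub_apply]
    module
  simp only [hKL.fderiv, (hL _ _).fderiv, smul_comm (_ * _ : ℝ) (2 : ℝ), ← smul_sum,
    sum_sum_mul_smul_sub_smul_sub_s17 _ h g (hsum θ), hg, smul_zero, sub_zero]
  module

end Derivatives

theorem vi_and_contrastive_balance_parameterized_backward_general
    {T X : Type} [Fintype T] [Fintype X] [Nonempty X] [DecidableEq X]
    (term : T → X)
    (d : ℕ)
    (pB : EuclideanSpace ℝ (Fin d) → T → ℝ)
    (hpB_pos : ∀ θ τ, 0 < pB θ τ)
    (hpB_sum : ∀ θ x, ∑ τ ∈ univ.filter (fun τ => term τ = x), pB θ τ = 1)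
    (hpB_diff : ∀ τ, Differentiable ℝ (fun θ => pB θ τ))
    (pF : T → ℝ) (hpF_pos : ∀ τ, 0 < pF τ)
    (R : X → ℝ) (hR : ∀ x, 0 < R x)
    (μ : EuclideanSpace ℝ (Fin d) → T → ℝ)
    (hμ : ∀ θ τ, μ θ τ = R (term τ) * pB θ τ / ∑ x, R x)
    (D : EuclideanSpace ℝ (Fin d) → ℝ)
    (hD : ∀ θ, D θ = ∑ τ, μ θ τ * Real.log (μ θ τ / pF τ))
    (L : T → T → EuclideanSpace ℝ (Fin d) → ℝ)
    (hL : ∀ τ τ' θ, L τ τ' θ =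
      (Real.log (pF τ / pB θ τ) - Real.log (pF τ' / pB θ τ')
        + Real.log (R (term τ') / R (term τ))) ^ 2) :
    ∀ θ, gradient D θ =
      (1 / 4 : ℝ) • ∑ τ, ∑ τ', (μ θ τ * μ θ τ') • gradient (L τ τ') θ := by
  intro θ
  have hS : 0 < ∑ x, R x := sum_pos (fun x _ => hR x) univ_nonempty
  have hμ_ne : ∀ τ, μ θ τ ≠ 0 := fun τ => by
    rw [hμ]; exact (div_pos (mul_pos (hR _) (hpB_pos θ τ)) hS).ne'
  have hμ_sum : ∀ θ, ∑ τ, μ θ τ = 1 := fun θ => by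
    simp only [hμ, ← sum_div, sum_mul_eq_sum_of_sum_fiber_eq_one term _ R (hpB_sum θ)]
    exact div_self hS.ne'
  have hμ_diff : ∀ τ, DifferentiableAt ℝ (fun θ => μ θ τ) θ := fun τ => by
    simp only [hμ, div_eq_mul_inv]; exact ((hpB_diff τ θ).const_mul _).mul_const _
  -- The normalizing constant `∑ x, R x` cancels in the difference of the log-ratios.
  have hL_eq : ∀ τ τ', L τ τ' = fun θ =>
      (Real.log (μ θ τ / pF τ) - Real.log (μ θ τ' / pF τ')) ^ 2 := fun τ τ' => by
    funext θ
    have hlog : ∀ τ, Real.log (μ θ τ / pF τ) = Real.log (R (term τ)) - Real.log (∑ x, R x)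
        - Real.log (pF τ / pB θ τ) := fun τ => by
      have hRpB := mul_pos (hR (term τ)) (hpB_pos θ τ)
      rw [hμ, Real.log_div (div_pos hRpB hS).ne' (hpF_pos τ).ne', Real.log_div hRpB.ne' hS.ne',
        Real.log_mul (hR _).ne' (hpB_pos θ τ).ne', Real.log_div (hpF_pos τ).ne' (hpB_pos θ τ).ne']
      ring
    rw [hL, hlog, hlog, Real.log_div (hR _).ne' (hR _).ne', ← neg_sq]
    ring_nf
  have hD_eq : D = fun θ => ∑ τ, μ θ τ * Real.log (μ θ τ / pF τ) := funext hD
  simp only [gradient, hD_eq, hL_eq,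
    fderiv_sum_mul_log_div_eq hμ_diff hμ_ne hμ_sum (fun τ => (hpF_pos τ).ne'), map_smul, map_sum]

/-- Variational inference and contrastive balance with a parameterized
backward policy (appendix theorem). -/
theorem vi_and_contrastive_balance_parameterized_backward
    {T X : Type} [Fintype T] [Fintype X] [Nonempty T] [Nonempty X] [DecidableEq X]
    (term : T → X) (hsurj : Function.Surjective term)
    (d : ℕ)
    (pB : EuclideanSpace ℝ (Fin d) → T → ℝ)
    (hpB_pos : ∀ θ τ, 0 < pB θ τ)
    (hpB_sum : ∀ θ x, ∑ τ ∈ univ.filter (fun τ => term τ = x), pB θ τ = 1)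
    (hpB_diff : ∀ τ, Differentiable ℝ (fun θ => pB θ τ))
    (pF : T → ℝ) (hpF_pos : ∀ τ, 0 < pF τ) (hpF_sum : ∑ τ, pF τ = 1)
    (R : X → ℝ) (hR : ∀ x, 0 < R x)
    (μ : EuclideanSpace ℝ (Fin d) → T → ℝ)
    (hμ : ∀ θ τ, μ θ τ = R (term τ) * pB θ τ / ∑ x, R x)
    (D : EuclideanSpace ℝ (Fin d) → ℝ)
    (hD : ∀ θ, D θ = ∑ τ, μ θ τ * Real.log (μ θ τ / pF τ))
    (L : T → T → EuclideanSpace ℝ (Fin d) → ℝ)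
    (hL : ∀ τ τ' θ, L τ τ' θ =
      (Real.log (pF τ / pB θ τ) - Real.log (pF τ' / pB θ τ')
        + Real.log (R (term τ') / R (term τ))) ^ 2) :
    ∀ θ, gradient D θ =
      (1 / 4 : ℝ) • ∑ τ, ∑ τ', (μ θ τ * μ θ τ') • gradient (L τ τ') θ :=
  vi_and_contrastive_balance_parameterized_backward_general term d pB hpB_pos hpB_sum hpB_diff pF
    hpF_pos R hR μ hμ D hD L hL
end

section
/- Weighted aggregating balance condition, sufficiency (Theorem 1'). Let ω₁, …, ω_N > 0 be real weights. Suppose for each n = 1, …, N the trajectory balance condition holds for (pFₙ, pBₙ, Rₙ), and the weighted aggregating balance condition holds: ∏_{n=1}^N (pFₙ(τ)·pBₙ(τ')/(pBₙ(τ)·pFₙ(τ')))^{ωₙ} = pF(τ)·pB(τ')/(pB(τ)·pF(τ')) for all τ, τ' ∈ 𝒯. Then the marginal of pF over terminal states satisfies p_T(x) = (∏_{n=1}^N Rₙ(x)^{ωₙ})/(Σ_{y∈𝒳} ∏_{n=1}^N Rₙ(y)^{ωₙ}) for all x ∈ 𝒳. -/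
/-!
Trajectory balance for `(pFₙ, pBₙ, Rₙ)` says that `pFₙ / pBₙ` is proportional to `Rₙ ∘ term`, so the
cross ratios `pFₙ(τ) pBₙ(τ') / (pBₙ(τ) pFₙ(τ'))` equal `Rₙ(term τ) / Rₙ(term τ')`. The weighted
aggregating balance condition then makes the cross ratios of `(pF, pB)` equal to those of
`G = ∏ₙ Rₙ ^ ωₙ`, which is trajectory balance for `(pF, pB, G)`; and trajectory balance with
normalised `pF` and fibrewise normalised `pB` forces the terminal marginal `G / ∑ G`.
-/

open Finset

section TrajectoryBalance

variable {T X : Type*} {term : T → X} {pF pB : T → ℝ} {R : X → ℝ} {Z : ℝ}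

theorem crossRatio_eq_of_balance (hZ : Z ≠ 0) (hpB : ∀ τ, pB τ ≠ 0)
    (hTB : ∀ τ, Z * pF τ = R (term τ) * pB τ) (τ τ' : T) :
    pF τ * pB τ' / (pB τ * pF τ') = R (term τ) / R (term τ') := by
  have hratio : ∀ τ, pF τ / pB τ = R (term τ) / Z := fun τ => by
    rw [div_eq_div_iff (hpB τ) hZ, mul_comm, hTB τ]
  rw [← div_div_div_eq, hratio, hratio, div_div_div_cancel_right₀ hZ]

theorem exists_balance_of_crossRatio_eq (τ₀ : T) (hpF : pF τ₀ ≠ 0) (hpB : ∀ τ, pB τ ≠ 0)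
    (hR : R (term τ₀) ≠ 0)
    (hcross : ∀ τ, pF τ * pB τ₀ / (pB τ * pF τ₀) = R (term τ) / R (term τ₀)) :
    ∃ Z ≠ 0, ∀ τ, Z * pF τ = R (term τ) * pB τ := by
  refine ⟨R (term τ₀) * pB τ₀ / pF τ₀, div_ne_zero (mul_ne_zero hR (hpB τ₀)) hpF, fun τ => ?_⟩
  have h := hcross τ
  rw [div_eq_div_iff (mul_ne_zero (hpB τ) hpF) hR] at h
  field_simp
  linear_combination h

variable [Fintype T] [DecidableEq X]

theorem mul_fiber_sum_eq_of_balance (hTB : ∀ τ, Z * pF τ = R (term τ) * pB τ)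
    (hpB_sum : ∀ x, ∑ τ ∈ univ.filter (fun τ => term τ = x), pB τ = 1) (x : X) :
    Z * ∑ τ ∈ univ.filter (fun τ => term τ = x), pF τ = R x :=
  calc Z * ∑ τ ∈ univ.filter (fun τ => term τ = x), pF τ
      = ∑ τ ∈ univ.filter (fun τ => term τ = x), R x * pB τ := by
        rw [mul_sum]
        refine sum_congr rfl fun τ hτ => ?_
        rw [hTB τ, (mem_filter.1 hτ).2]
    _ = R x := by rw [← mul_sum, hpB_sum x, mul_one]

theorem fiber_sum_eq_of_balance [Fintype X] (hZ : Z ≠ 0) (hTB : ∀ τ, Z * pF τ = R (term τ) * pB τ)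
    (hpF_sum : ∑ τ, pF τ = 1)
    (hpB_sum : ∀ x, ∑ τ ∈ univ.filter (fun τ => term τ = x), pB τ = 1) (x : X) :
    ∑ τ ∈ univ.filter (fun τ => term τ = x), pF τ = R x / ∑ y, R y := by
  have hfiber := mul_fiber_sum_eq_of_balance hTB hpB_sum
  have hZ_eq : Z = ∑ y, R y := by
    rw [← mul_one Z, ← hpF_sum, ← sum_fiberwise univ term pF, mul_sum]
    exact sum_congr rfl fun y _ => hfiber y
  rw [← hZ_eq, eq_div_iff hZ, mul_comm, hfiber x]

end TrajectoryBalance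

theorem Real.prod_div_rpow {ι : Type*} (s : Finset ι) {f g : ι → ℝ} (hf : ∀ i ∈ s, 0 ≤ f i)
    (hg : ∀ i ∈ s, 0 ≤ g i) (w : ι → ℝ) :
    ∏ i ∈ s, (f i / g i) ^ w i = (∏ i ∈ s, f i ^ w i) / ∏ i ∈ s, g i ^ w i := by
  rw [← prod_div_distrib]
  exact prod_congr rfl fun i hi => Real.div_rpow (hf i hi) (hg i hi) (w i)

theorem weighted_aggregating_balance_sufficiency_general
    {T X : Type} [Fintype T] [Fintype X] [Nonempty T] [DecidableEq X]
    (term : T → X)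
    (N : ℕ) (ω : Fin N → ℝ)
    (pFn pBn : Fin N → T → ℝ) (Rn : Fin N → X → ℝ)
    (pF pB : T → ℝ)
    (hpBn_pos : ∀ n τ, 0 < pBn n τ)
    (hRn_pos : ∀ n x, 0 < Rn n x)
    (hpF_pos : ∀ τ, 0 < pF τ) (hpF_sum : ∑ τ, pF τ = 1)
    (hpB_pos : ∀ τ, 0 < pB τ)
    (hpB_sum : ∀ x, ∑ τ ∈ univ.filter (fun τ => term τ = x), pB τ = 1)
    (hTBn : ∀ n, ∃ Z > (0 : ℝ), ∀ τ, Z * pFn n τ = Rn n (term τ) * pBn n τ)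
    (hAB : ∀ τ τ', ∏ n, (pFn n τ * pBn n τ' / (pBn n τ * pFn n τ')) ^ (ω n) =
      pF τ * pB τ' / (pB τ * pF τ')) :
    ∀ x, ∑ τ ∈ univ.filter (fun τ => term τ = x), pF τ =
      (∏ n, Rn n x ^ (ω n)) / ∑ y, ∏ n, Rn n y ^ (ω n) := by
  set G : X → ℝ := fun x => ∏ n, Rn n x ^ (ω n)
  have hG_pos (x : X) : 0 < G x := prod_pos fun n _ => Real.rpow_pos_of_pos (hRn_pos n x) _
  have hcrossn (n : Fin N) (τ τ' : T) :
      pFn n τ * pBn n τ' / (pBn n τ * pFn n τ') = Rn n (term τ) / Rn n (term τ') := by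
    obtain ⟨Z, hZ, hTB⟩ := hTBn n
    exact crossRatio_eq_of_balance hZ.ne' (fun τ => (hpBn_pos n τ).ne') hTB τ τ'
  have hcross (τ τ' : T) : pF τ * pB τ' / (pB τ * pF τ') = G (term τ) / G (term τ') := by
    rw [← hAB, prod_congr rfl fun n _ => by rw [hcrossn n τ τ']]
    exact Real.prod_div_rpow _ (fun n _ => (hRn_pos n _).le) (fun n _ => (hRn_pos n _).le) ω
  obtain ⟨τ₀⟩ := ‹Nonempty T›
  obtain ⟨Z, hZ, hTB⟩ := exists_balance_of_crossRatio_eq τ₀ (hpF_pos τ₀).ne'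
    (fun τ => (hpB_pos τ).ne') (hG_pos _).ne' fun τ => hcross τ τ₀
  exact fiber_sum_eq_of_balance hZ hTB hpF_sum hpB_sum

/-- Weighted aggregating balance condition, sufficiency (Theorem 1'). -/
theorem weighted_aggregating_balance_sufficiency
    {T X : Type} [Fintype T] [Fintype X] [Nonempty T] [Nonempty X] [DecidableEq X]
    (term : T → X) (hsurj : Function.Surjective term)
    (N : ℕ) (ω : Fin N → ℝ) (hω : ∀ n, 0 < ω n)
    (pFn pBn : Fin N → T → ℝ) (Rn : Fin N → X → ℝ)
    (pF pB : T → ℝ)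
    (hpFn_pos : ∀ n τ, 0 < pFn n τ) (hpFn_sum : ∀ n, ∑ τ, pFn n τ = 1)
    (hpBn_pos : ∀ n τ, 0 < pBn n τ)
    (hpBn_sum : ∀ n x, ∑ τ ∈ univ.filter (fun τ => term τ = x), pBn n τ = 1)
    (hRn_pos : ∀ n x, 0 < Rn n x)
    (hpF_pos : ∀ τ, 0 < pF τ) (hpF_sum : ∑ τ, pF τ = 1)
    (hpB_pos : ∀ τ, 0 < pB τ)
    (hpB_sum : ∀ x, ∑ τ ∈ univ.filter (fun τ => term τ = x), pB τ = 1)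
    (hTBn : ∀ n, ∃ Z > (0 : ℝ), ∀ τ, Z * pFn n τ = Rn n (term τ) * pBn n τ)
    (hAB : ∀ τ τ', ∏ n, (pFn n τ * pBn n τ' / (pBn n τ * pFn n τ')) ^ (ω n) =
      pF τ * pB τ' / (pB τ * pF τ')) :
    ∀ x, ∑ τ ∈ univ.filter (fun τ => term τ = x), pF τ =
      (∏ n, Rn n x ^ (ω n)) / ∑ y, ∏ n, Rn n y ^ (ω n) :=
  weighted_aggregating_balance_sufficiency_general term N ω pFn pBn Rn pF pB hpBn_pos hRn_pos
    hpF_pos hpF_sum hpB_pos hpB_sum hTBn hAB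
end
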